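/- arXiv:1301.2678 — 2 statements merged into one kernel-verified Lean document; each statement's English description precedes it below -/
import Mathlib

section
/- Let P be a b-bounded and uniform AC-MAS over an infinite interpretation domain U with adom(s0) ⊆ C, and let φ be an FO-CTLK formula. Then there exists an AC-MAS P' over a finite interpretation domain U' such that P ⊨ φ if and only if P' ⊨ φ. -/
/-!  Common formalisation of artifact-centric multi-agent systems (AC-MAS). -/

open Set

/-- A database schema: a finite type of relation symbols, each with an arity. -/
structure Schema : Type 1 where
  Rel : Type
  [relFin : Fintype Rel]
  arity : Rel → ℕ

attribute [instance] Schema.relFin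

/-- A `D`-instance over an interpretation domain `U`: every relation symbol is
interpreted as a finite set of tuples over `U`. -/
structure Inst (D : Schema) (U : Type) : Type where
  rel : ∀ r : D.Rel, Set (Fin (D.arity r) → U)
  finite : ∀ r, (rel r).Finite

/-- The active domain of an instance. -/
def Inst.adom {D : Schema} {U : Type} (I : Inst D U) : Set U :=
  { u | ∃ (r : D.Rel) (t : Fin (D.arity r) → U), t ∈ I.rel r ∧ ∃ j, t j = u }

/-- The schema `D` together with a primed copy of every relation symbol. -/
def Schema.double (D : Schema) : Schema where
  Rel := D.Rel ⊕ D.Rel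
  relFin := inferInstance
  arity := Sum.elim D.arity D.arity

/-- The disjunctive join `I ⊕ J`: unprimed symbols are interpreted as in `I`,
primed symbols as in `J`. -/
def Inst.oplus {D : Schema} {U : Type} (I J : Inst D U) : Inst D.double U where
  rel := fun r => match r with
    | .inl r₀ => I.rel r₀
    | .inr r₀ => J.rel r₀
  finite := fun r => by
    cases r with
    | inl r₀ => exact I.finite r₀
    | inr r₀ => exact J.finite r₀

/-- Image of an instance under a map of domains. -/
def Inst.map {D : Schema} {C U : Type} (f : C → U) (I : Inst D C) : Inst D U where
  rel := fun r => (fun t => f ∘ t) '' I.rel r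
  finite := fun r => (I.finite r).image _

/-! ### First-order formulas -/

/-- Terms: variables (natural numbers) or constants from `C`. -/
abbrev Term (C : Type) := ℕ ⊕ C

def Term.varsF {C : Type} : Term C → Finset ℕ
  | .inl x => {x}
  | .inr _ => ∅

def Term.constsS {C : Type} : Term C → Set C
  | .inl _ => ∅
  | .inr c => {c}

def Term.val {C U : Type} (cst : C → U) (σ : ℕ → U) : Term C → U
  | .inl x => σ x
  | .inr c => cst c

/-- First-order formulas over schema `D`, with equality, constants from `C`
and no function symbols. -/
inductive FO (D : Schema) (C : Type) : Type where
  | eq : Term C → Term C → FO D C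
  | rel : (r : D.Rel) → (Fin (D.arity r) → Term C) → FO D C
  | not : FO D C → FO D C
  | imp : FO D C → FO D C → FO D C
  | all : ℕ → FO D C → FO D C

namespace FO

variable {D : Schema} {C : Type}

/-- Free variables. -/
def free : FO D C → Finset ℕ
  | .eq t₁ t₂ => t₁.varsF ∪ t₂.varsF
  | .rel _ ts => Finset.univ.biUnion fun j => (ts j).varsF
  | .not φ => φ.free
  | .imp φ ψ => φ.free ∪ ψ.free
  | .all x φ => φ.free.erase x

/-- All variables. -/
def vars : FO D C → Finset ℕ
  | .eq t₁ t₂ => t₁.varsF ∪ t₂.varsF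
  | .rel _ ts => Finset.univ.biUnion fun j => (ts j).varsF
  | .not φ => φ.vars
  | .imp φ ψ => φ.vars ∪ ψ.vars
  | .all x φ => insert x φ.vars

/-- Constants mentioned in a formula. -/
def consts : FO D C → Set C
  | .eq t₁ t₂ => t₁.constsS ∪ t₂.constsS
  | .rel _ ts => ⋃ j, (ts j).constsS
  | .not φ => φ.consts
  | .imp φ ψ => φ.consts ∪ ψ.consts
  | .all _ φ => φ.consts

/-- The formula mentions only relation symbols from `R`. -/
def UsesOnly (R : Set D.Rel) : FO D C → Prop
  | .eq _ _ => True
  | .rel r _ => r ∈ R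
  | .not φ => φ.UsesOnly R
  | .imp φ ψ => φ.UsesOnly R ∧ ψ.UsesOnly R
  | .all _ φ => φ.UsesOnly R

/-- Satisfaction of FO-formulas, with active-domain quantification. -/
def sat {U : Type} (cst : C → U) (I : Inst D U) : (ℕ → U) → FO D C → Prop
  | σ, .eq t₁ t₂ => t₁.val cst σ = t₂.val cst σ
  | σ, .rel r ts => (fun j => (ts j).val cst σ) ∈ I.rel r
  | σ, .not φ => ¬ sat cst I σ φ
  | σ, .imp φ ψ => sat cst I σ φ → sat cst I σ ψ
  | σ, .all x φ => ∀ u ∈ I.adom, sat cst I (Function.update σ x u) φ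

end FO

/-! ### Agents and AC-MAS -/

/-- The signature of an agent: a finite set of action types with parameter counts. -/
structure AgentSig : Type 1 where
  Act : Type
  [actFin : Fintype Act]
  np : Act → ℕ

attribute [instance] AgentSig.actFin

/-- A ground action: an action type together with ground parameters. -/
def GAct (g : AgentSig) (U : Type) : Type := Σ a : g.Act, Fin (g.np a) → U

/-- Renaming of ground-action parameters. -/
def GAct.map {g : AgentSig} {U U' : Type} (f : U → U') : GAct g U → GAct g U'
  | ⟨a, u⟩ => ⟨a, fun j => f (u j)⟩

/-- An agent: local states structured as database instances, and a protocol. -/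
structure Agent (D : Schema) (g : AgentSig) (U : Type) : Type where
  L : Set (Inst D U)
  Pr : Inst D U → Set (GAct g U)

/-- A global state: one local database instance per agent `0, …, n`
(agent `0` is the environment). -/
abbrev GState (D : Schema) (n : ℕ) (U : Type) := Fin (n+1) → Inst D U

/-- A joint (global) ground action. -/
abbrev JAct {n : ℕ} (sig : Fin (n+1) → AgentSig) (U : Type) : Type := ∀ i, GAct (sig i) U

def JAct.map {n : ℕ} {sig : Fin (n+1) → AgentSig} {U U' : Type} (f : U → U')
    (a : JAct sig U) : JAct sig U' := fun i => (a i).map f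

/-- The set of individuals occurring as parameters of a joint ground action. -/
def actElems {n : ℕ} {sig : Fin (n+1) → AgentSig} {U : Type} (a : JAct sig U) : Set U :=
  { u | ∃ (i : Fin (n+1)) (j : Fin ((sig i).np (a i).1)), (a i).2 j = u }

/-- Active domain of a family of instances (e.g. a global state). -/
def adomF {D : Schema} {X U : Type} (s : X → Inst D U) : Set U := ⋃ i, (s i).adom

/-- The global instance `D_s` associated with a global state. -/
def gInst {D : Schema} {n : ℕ} {U : Type} (s : GState D n U) : Inst D U where
  rel := fun r => ⋃ i, (s i).rel r
  finite := fun r => Set.finite_iUnion fun i => (s i).finite r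

/-- Componentwise disjunctive join of two global states. -/
def oplusG {D : Schema} {n : ℕ} {U : Type} (s t : GState D n U) : GState D.double n U :=
  fun i => (s i).oplus (t i)

/-- An artifact-centric multi-agent system. -/
structure ACMAS (D : Schema) {n : ℕ} (sig : Fin (n+1) → AgentSig) {U : Type}
    (Ag : ∀ i, Agent D (sig i) U) : Type where
  /-- set of (reachable) global states -/
  S : Set (GState D n U)
  /-- initial global state -/
  s0 : GState D n U
  s0_mem : s0 ∈ S
  states_local : ∀ s ∈ S, ∀ i, s i ∈ (Ag i).L
  /-- global transition function -/
  τ : GState D n U → JAct sig U → Set (GState D n U)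
  /-- `τ` is defined only on protocol-enabled joint actions -/
  tau_enabled : ∀ s a, (τ s a).Nonempty → ∀ i, a i ∈ (Ag i).Pr (s i)
  tau_closed : ∀ s ∈ S, ∀ a, τ s a ⊆ S

namespace ACMAS

variable {D : Schema} {n : ℕ} {sig : Fin (n+1) → AgentSig} {U : Type}
  {Ag : ∀ i, Agent D (sig i) U}

/-- The transition relation `s → t`. -/
def Tr (M : ACMAS D sig Ag) (s t : GState D n U) : Prop := ∃ a, t ∈ M.τ s a

/-- Epistemic indistinguishability for agent `i`. -/
def Epi (M : ACMAS D sig Ag) (i : Fin (n+1)) (s t : GState D n U) : Prop :=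
  s ∈ M.S ∧ t ∈ M.S ∧ s i = t i

/-- Union of the epistemic relations of agents `1, …, n`. -/
def EpiAny (M : ACMAS D sig Ag) (s t : GState D n U) : Prop :=
  ∃ i : Fin n, M.Epi i.succ s t

/-- The standard assumptions: the transition relation is serial and `S` is
exactly the set of states reachable from `s0`. -/
def Std (M : ACMAS D sig Ag) : Prop :=
  (∀ s ∈ M.S, ∃ t, M.Tr s t) ∧ M.S = { s | Relation.ReflTransGen M.Tr M.s0 s }

/-- An (infinite) run. -/
def IsRun (M : ACMAS D sig Ag) (r : ℕ → GState D n U) : Prop :=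
  (∀ k, r k ∈ M.S) ∧ ∀ k, M.Tr (r k) (r (k+1))

/-- A temporal-epistemic run. -/
def IsTERun (M : ACMAS D sig Ag) (r : ℕ → GState D n U) : Prop :=
  (∀ k, r k ∈ M.S) ∧ ∀ k, M.Tr (r k) (r (k+1)) ∨ M.EpiAny (r k) (r (k+1))

end ACMAS

/-! ### Isomorphisms and equivalent assignments -/

/-- `ι` is a witness for the isomorphism of the families `s` and `s'`:
a constant-preserving bijection between the active domains extended with the
constants, preserving all relations componentwise. -/
def IsWitness {D : Schema} {X C U U' : Type} (cst : C → U) (cst' : C → U')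
    (ι : U → U') (s : X → Inst D U) (s' : X → Inst D U') : Prop :=
  Set.BijOn ι (adomF s ∪ Set.range cst) (adomF s' ∪ Set.range cst') ∧
  (∀ c, ι (cst c) = cst' c) ∧
  ∀ (i : X) (r : D.Rel) (t : Fin (D.arity r) → U),
    (∀ j, t j ∈ adomF s ∪ Set.range cst) →
    (t ∈ (s i).rel r ↔ (fun j => ι (t j)) ∈ (s' i).rel r)

/-- Isomorphism of families of instances (in particular global states). -/
def Iso {D : Schema} {X C U U' : Type} (cst : C → U) (cst' : C → U')
    (s : X → Inst D U) (s' : X → Inst D U') : Prop :=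
  ∃ ι, IsWitness cst cst' ι s s'

/-- Equivalent assignments for a set `V` of variables w.r.t. `s` and `s'`. -/
def EqAssign {D : Schema} {n : ℕ} {C U U' : Type} (cst : C → U) (cst' : C → U')
    (V : Set ℕ) (σ : ℕ → U) (σ' : ℕ → U')
    (s : GState D n U) (s' : GState D n U') : Prop :=
  ∃ γ : U → U',
    Set.BijOn γ (adomF s ∪ Set.range cst ∪ σ '' V)
      (adomF s' ∪ Set.range cst' ∪ σ' '' V) ∧
    IsWitness cst cst' γ s s' ∧
    ∀ x ∈ V, σ' x = γ (σ x)

/-! ### Simulations and bisimulations -/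

section Bisim

variable {D : Schema} {n : ℕ} {sig sig' : Fin (n+1) → AgentSig} {C U U' : Type}
  {Ag : ∀ i, Agent D (sig i) U} {Ag' : ∀ i, Agent D (sig' i) U'}

/-- Simulation between two AC-MAS. -/
def IsSim (cst : C → U) (cst' : C → U')
    (M : ACMAS D sig Ag) (M' : ACMAS D sig' Ag')
    (R : GState D n U → GState D n U' → Prop) : Prop :=
  ∀ s s', R s s' →
    s ∈ M.S ∧ s' ∈ M'.S ∧ Iso cst cst' s s' ∧
    ∀ t, M.Tr s t → ∃ t', M'.Tr s' t' ∧ R t t'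

/-- Bisimulation. -/
def IsBisim (cst : C → U) (cst' : C → U')
    (M : ACMAS D sig Ag) (M' : ACMAS D sig' Ag')
    (R : GState D n U → GState D n U' → Prop) : Prop :=
  IsSim cst cst' M M' R ∧ IsSim cst' cst M' M (fun s' s => R s s')

/-- Bisimilarity of states. -/
def Bisimilar (cst : C → U) (cst' : C → U')
    (M : ACMAS D sig Ag) (M' : ACMAS D sig' Ag')
    (s : GState D n U) (s' : GState D n U') : Prop :=
  ∃ R, IsBisim cst cst' M M' R ∧ R s s'

/-- `P ≈ P'`: the two systems are bisimilar. -/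
def BisimSys (cst : C → U) (cst' : C → U')
    (M : ACMAS D sig Ag) (M' : ACMAS D sig' Ag') : Prop :=
  Bisimilar cst cst' M M' M.s0 M'.s0

/-- ⊕-simulation. -/
def IsOSim (cst : C → U) (cst' : C → U')
    (M : ACMAS D sig Ag) (M' : ACMAS D sig' Ag')
    (R : GState D n U → GState D n U' → Prop) : Prop :=
  ∀ s s', R s s' →
    s ∈ M.S ∧ s' ∈ M'.S ∧ Iso cst cst' s s' ∧
    (∀ t, M.Tr s t → ∃ t', M'.Tr s' t' ∧
        Iso cst cst' (oplusG s t) (oplusG s' t') ∧ R t t') ∧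
    (∀ (t : GState D n U) (i : Fin n), M.Epi i.succ s t →
        ∃ t', M'.Epi i.succ s' t' ∧
          Iso cst cst' (oplusG s t) (oplusG s' t') ∧ R t t')

/-- ⊕-bisimulation. -/
def IsOBisim (cst : C → U) (cst' : C → U')
    (M : ACMAS D sig Ag) (M' : ACMAS D sig' Ag')
    (R : GState D n U → GState D n U' → Prop) : Prop :=
  IsOSim cst cst' M M' R ∧ IsOSim cst' cst M' M (fun s' s => R s s')

/-- ⊕-bisimilarity of states. -/
def OBisimilar (cst : C → U) (cst' : C → U')
    (M : ACMAS D sig Ag) (M' : ACMAS D sig' Ag')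
    (s : GState D n U) (s' : GState D n U') : Prop :=
  ∃ R, IsOBisim cst cst' M M' R ∧ R s s'

/-- The two systems are ⊕-bisimilar. -/
def OBisimSys (cst : C → U) (cst' : C → U')
    (M : ACMAS D sig Ag) (M' : ACMAS D sig' Ag') : Prop :=
  OBisimilar cst cst' M M' M.s0 M'.s0

end Bisim

/-! ### Uniformity and boundedness -/

section Uniform

variable {D : Schema} {n : ℕ} {sig : Fin (n+1) → AgentSig} {C U : Type}
  {Ag : ∀ i, Agent D (sig i) U}

/-- Temporal condition (1) of uniformity. -/
def UniformT (cst : C → U) (M : ACMAS D sig Ag) : Prop :=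
  ∀ s ∈ M.S, ∀ t ∈ M.S, ∀ s' ∈ M.S, ∀ (t' : GState D n U) (a : JAct sig U),
    t ∈ M.τ s a →
    ∀ ι : U → U, IsWitness cst cst ι (oplusG s t) (oplusG s' t') →
    ∀ ι' : U → U,
      (∀ u ∈ adomF (oplusG s t) ∪ Set.range cst, ι' u = ι u) →
      Set.InjOn ι' (adomF (oplusG s t) ∪ Set.range cst ∪ actElems a) →
      (∀ c, ι' (cst c) = cst c) →
      t' ∈ M.τ s' (JAct.map ι' a)

/-- Epistemic condition (2) of uniformity. -/
def UniformE (cst : C → U) (M : ACMAS D sig Ag) : Prop :=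
  ∀ s ∈ M.S, ∀ t ∈ M.S, ∀ s' ∈ M.S, ∀ (t' : GState D n U) (i : Fin n),
    M.Epi i.succ s t → Iso cst cst (oplusG s t) (oplusG s' t') →
    M.Epi i.succ s' t'

/-- Uniform AC-MAS. -/
def Uniform (cst : C → U) (M : ACMAS D sig Ag) : Prop :=
  UniformT cst M ∧ UniformE cst M

/-- `b`-bounded AC-MAS: no reachable state has more than `b` distinct elements
in its active domain. -/
def BBounded (M : ACMAS D sig Ag) (b : ℕ) : Prop :=
  ∀ s ∈ M.S, (adomF s).Finite ∧ (adomF s).ncard ≤ b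

end Uniform

/-- `N_Ag`: the sum over the agents of the maximal number of parameters of
their action types. -/
def NAg {n : ℕ} (sig : Fin (n+1) → AgentSig) : ℕ :=
  ∑ i, Finset.univ.sup (sig i).np

/-! ### Abstractions -/

section Abstraction

variable {D : Schema} {n : ℕ} {sig : Fin (n+1) → AgentSig} {C U U' : Type}
  {Ag : ∀ i, Agent D (sig i) U} {Ag' : ∀ i, Agent D (sig i) U'}

/-- `A'` is the abstract agent corresponding to `A`, over the domain `U'`. -/
def IsAbstractAgent {g : AgentSig} (cst : C → U) (cst' : C → U')
    (A : Agent D g U) (A' : Agent D g U') : Prop :=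
  ∀ (l' : Inst D U') (α' : GAct g U'), α' ∈ A'.Pr l' ↔
    ∃ l ∈ A.L, ∃ α ∈ A.Pr l, ∃ ι : U → U',
      IsWitness cst cst' ι (fun _ : PUnit => l) (fun _ : PUnit => l') ∧
      ∃ ι' : U → U',
        (∀ u ∈ l.adom ∪ Set.range cst, ι' u = ι u) ∧
        Set.InjOn ι' (l.adom ∪ Set.range cst ∪ Set.range α.2) ∧
        α' = α.map ι'

/-- `M'` is an abstraction of `M` (over the abstract agents `Ag'`). -/
def IsAbstraction (cst : C → U) (cst' : C → U')
    (M : ACMAS D sig Ag) (M' : ACMAS D sig Ag') : Prop :=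
  (∀ i, IsAbstractAgent cst cst' (Ag i) (Ag' i)) ∧
  Iso cst' cst M'.s0 M.s0 ∧
  ∀ (s' t' : GState D n U') (a' : JAct sig U'),
    t' ∈ M'.τ s' a' ↔
      ∃ s ∈ M.S, ∃ t ∈ M.S, ∃ a : JAct sig U, t ∈ M.τ s a ∧
        ∃ ι : U → U', IsWitness cst cst' ι s s' ∧ IsWitness cst cst' ι t t' ∧
          ∃ ι' : U → U',
            (∀ u ∈ adomF s ∪ adomF t ∪ Set.range cst, ι' u = ι u) ∧
            Set.InjOn ι' (adomF s ∪ adomF t ∪ Set.range cst ∪ actElems a) ∧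
            a' = JAct.map ι' a

/-- `M'` is a ⊕-abstraction of `M` (over the abstract agents `Ag'`).
The requirement `s0' = s0` is rendered, across the two interpretation
domains, as: the initial states are isomorphic and `adom(s0) ⊆ C`. -/
def IsOAbstraction (cst : C → U) (cst' : C → U')
    (M : ACMAS D sig Ag) (M' : ACMAS D sig Ag') : Prop :=
  (∀ i, IsAbstractAgent cst cst' (Ag i) (Ag' i)) ∧
  (Iso cst cst' M.s0 M'.s0 ∧ adomF M.s0 ⊆ Set.range cst) ∧
  ∀ (s' t' : GState D n U') (a' : JAct sig U'),
    t' ∈ M'.τ s' a' ↔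
      ∃ s ∈ M.S, ∃ t ∈ M.S, ∃ a : JAct sig U, t ∈ M.τ s a ∧
        ∃ ι : U → U',
          IsWitness cst cst' ι (oplusG s t) (oplusG s' t') ∧
          ∃ ι' : U → U',
            (∀ u ∈ adomF (oplusG s t) ∪ Set.range cst, ι' u = ι u) ∧
            Set.InjOn ι' (adomF (oplusG s t) ∪ Set.range cst ∪ actElems a) ∧
            a' = JAct.map ι' a

end Abstraction

/-! ### Temporal-epistemic specification languages -/

/-- Sentence-atomic FO-CTL formulas. -/
inductive SAFOCTL (D : Schema) (C : Type) : Type where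
  | atom : (ψ : FO D C) → ψ.free = ∅ → SAFOCTL D C
  | not : SAFOCTL D C → SAFOCTL D C
  | imp : SAFOCTL D C → SAFOCTL D C → SAFOCTL D C
  | ax : SAFOCTL D C → SAFOCTL D C
  | au : SAFOCTL D C → SAFOCTL D C → SAFOCTL D C
  | eu : SAFOCTL D C → SAFOCTL D C → SAFOCTL D C

/-- Satisfaction of SA-FO-CTL formulas at a global state. -/
def SAFOCTL.sat {D : Schema} {C : Type} {n : ℕ} {sig : Fin (n+1) → AgentSig}
    {U : Type} {Ag : ∀ i, Agent D (sig i) U}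
    (cst : C → U) (M : ACMAS D sig Ag) :
    SAFOCTL D C → GState D n U → Prop
  | .atom ψ _, s => ∀ σ, FO.sat cst (gInst s) σ ψ
  | .not φ, s => ¬ SAFOCTL.sat cst M φ s
  | .imp φ ψ, s => SAFOCTL.sat cst M φ s → SAFOCTL.sat cst M ψ s
  | .ax φ, s => ∀ r, M.IsRun r → r 0 = s → SAFOCTL.sat cst M φ (r 1)
  | .au φ ψ, s => ∀ r, M.IsRun r → r 0 = s →
      ∃ k, SAFOCTL.sat cst M ψ (r k) ∧ ∀ j < k, SAFOCTL.sat cst M φ (r j)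
  | .eu φ ψ, s => ∃ r, M.IsRun r ∧ r 0 = s ∧
      ∃ k, SAFOCTL.sat cst M ψ (r k) ∧ ∀ j < k, SAFOCTL.sat cst M φ (r j)

/-- `P ⊨ φ` for SA-FO-CTL. -/
def SAFOCTL.satM {D : Schema} {C : Type} {n : ℕ} {sig : Fin (n+1) → AgentSig}
    {U : Type} {Ag : ∀ i, Agent D (sig i) U}
    (cst : C → U) (M : ACMAS D sig Ag) (φ : SAFOCTL D C) : Prop :=
  SAFOCTL.sat cst M φ M.s0

/-- FO-CTLK formulas, with epistemic operators for agents `1, …, n` and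
common knowledge. -/
inductive FOCTLK (D : Schema) (C : Type) (n : ℕ) : Type where
  | atom : FO D C → FOCTLK D C n
  | not : FOCTLK D C n → FOCTLK D C n
  | imp : FOCTLK D C n → FOCTLK D C n → FOCTLK D C n
  | all : ℕ → FOCTLK D C n → FOCTLK D C n
  | ax : FOCTLK D C n → FOCTLK D C n
  | au : FOCTLK D C n → FOCTLK D C n → FOCTLK D C n
  | eu : FOCTLK D C n → FOCTLK D C n → FOCTLK D C n
  | know : Fin n → FOCTLK D C n → FOCTLK D C n
  | ck : FOCTLK D C n → FOCTLK D C n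

namespace FOCTLK

variable {D : Schema} {C : Type} {n : ℕ}

def free : FOCTLK D C n → Finset ℕ
  | .atom ψ => ψ.free
  | .not φ => φ.free
  | .imp φ ψ => φ.free ∪ ψ.free
  | .all x φ => φ.free.erase x
  | .ax φ => φ.free
  | .au φ ψ => φ.free ∪ ψ.free
  | .eu φ ψ => φ.free ∪ ψ.free
  | .know _ φ => φ.free
  | .ck φ => φ.free

def vars : FOCTLK D C n → Finset ℕ
  | .atom ψ => ψ.vars
  | .not φ => φ.vars
  | .imp φ ψ => φ.vars ∪ ψ.vars
  | .all x φ => insert x φ.vars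
  | .ax φ => φ.vars
  | .au φ ψ => φ.vars ∪ ψ.vars
  | .eu φ ψ => φ.vars ∪ ψ.vars
  | .know _ φ => φ.vars
  | .ck φ => φ.vars

/-- Satisfaction `(P, s, σ) ⊨ φ` of FO-CTLK formulas. -/
def sat {sig : Fin (n+1) → AgentSig} {U : Type} {Ag : ∀ i, Agent D (sig i) U}
    (cst : C → U) (M : ACMAS D sig Ag) :
    FOCTLK D C n → GState D n U → (ℕ → U) → Prop
  | .atom ψ, s, σ => FO.sat cst (gInst s) σ ψ
  | .not φ, s, σ => ¬ sat cst M φ s σ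
  | .imp φ ψ, s, σ => sat cst M φ s σ → sat cst M ψ s σ
  | .all x φ, s, σ => ∀ u ∈ adomF s, sat cst M φ s (Function.update σ x u)
  | .ax φ, s, σ => ∀ r, M.IsRun r → r 0 = s → sat cst M φ (r 1) σ
  | .au φ ψ, s, σ => ∀ r, M.IsRun r → r 0 = s →
      ∃ k, sat cst M ψ (r k) σ ∧ ∀ j < k, sat cst M φ (r j) σ
  | .eu φ ψ, s, σ => ∃ r, M.IsRun r ∧ r 0 = s ∧
      ∃ k, sat cst M ψ (r k) σ ∧ ∀ j < k, sat cst M φ (r j) σ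
  | .know i φ, s, σ => ∀ t, M.Epi i.succ s t → sat cst M φ t σ
  | .ck φ, s, σ => ∀ t, Relation.TransGen M.EpiAny s t → sat cst M φ t σ

/-- `P ⊨ φ` for FO-CTLK: satisfaction at the initial state under every
assignment. -/
def satM {sig : Fin (n+1) → AgentSig} {U : Type} {Ag : ∀ i, Agent D (sig i) U}
    (cst : C → U) (M : ACMAS D sig Ag) (φ : FOCTLK D C n) : Prop :=
  ∀ σ : ℕ → U, sat cst M φ M.s0 σ

end FOCTLK

/-- FO-ECTLK: the existential fragment. -/
inductive FOECTLK (D : Schema) (C : Type) (n : ℕ) : Type where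
  | atom : FO D C → FOECTLK D C n
  | and : FOECTLK D C n → FOECTLK D C n → FOECTLK D C n
  | or : FOECTLK D C n → FOECTLK D C n → FOECTLK D C n
  | all : ℕ → FOECTLK D C n → FOECTLK D C n
  | ex : ℕ → FOECTLK D C n → FOECTLK D C n
  | enext : FOECTLK D C n → FOECTLK D C n
  | eu : FOECTLK D C n → FOECTLK D C n → FOECTLK D C n
  | dknow : Fin n → FOECTLK D C n → FOECTLK D C n
  | dck : FOECTLK D C n → FOECTLK D C n

/-- Satisfaction of FO-ECTLK formulas. -/
def FOECTLK.sat {D : Schema} {C : Type} {n : ℕ} {sig : Fin (n+1) → AgentSig}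
    {U : Type} {Ag : ∀ i, Agent D (sig i) U}
    (cst : C → U) (M : ACMAS D sig Ag) :
    FOECTLK D C n → GState D n U → (ℕ → U) → Prop
  | .atom ψ, s, σ => FO.sat cst (gInst s) σ ψ
  | .and φ ψ, s, σ => FOECTLK.sat cst M φ s σ ∧ FOECTLK.sat cst M ψ s σ
  | .or φ ψ, s, σ => FOECTLK.sat cst M φ s σ ∨ FOECTLK.sat cst M ψ s σ
  | .all x φ, s, σ => ∀ u ∈ adomF s, FOECTLK.sat cst M φ s (Function.update σ x u)
  | .ex x φ, s, σ => ∃ u ∈ adomF s, FOECTLK.sat cst M φ s (Function.update σ x u)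
  | .enext φ, s, σ => ∃ r, M.IsRun r ∧ r 0 = s ∧ FOECTLK.sat cst M φ (r 1) σ
  | .eu φ ψ, s, σ => ∃ r, M.IsRun r ∧ r 0 = s ∧
      ∃ k, FOECTLK.sat cst M ψ (r k) σ ∧ ∀ j < k, FOECTLK.sat cst M φ (r j) σ
  | .dknow i φ, s, σ => ∃ t, M.Epi i.succ s t ∧ FOECTLK.sat cst M φ t σ
  | .dck φ, s, σ => ∃ t, Relation.TransGen M.EpiAny s t ∧ FOECTLK.sat cst M φ t σ

/-- `P ⊨ φ` for FO-ECTLK. -/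
def FOECTLK.satM {D : Schema} {C : Type} {n : ℕ} {sig : Fin (n+1) → AgentSig}
    {U : Type} {Ag : ∀ i, Agent D (sig i) U}
    (cst : C → U) (M : ACMAS D sig Ag) (φ : FOECTLK D C n) : Prop :=
  ∀ σ : ℕ → U, FOECTLK.sat cst M φ M.s0 σ

/-- `Mb` is the `b`-restriction of `M`. -/
def IsBRestriction {D : Schema} {n : ℕ} {sig : Fin (n+1) → AgentSig} {U : Type}
    {Ag : ∀ i, Agent D (sig i) U} (Mb M : ACMAS D sig Ag) (b : ℕ) : Prop :=
  Mb.s0 = M.s0 ∧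
  Mb.S = { s ∈ M.S | (adomF s).Finite ∧ (adomF s).ncard ≤ b } ∧
  ∀ s a, Mb.τ s a = { t ∈ M.τ s a | s ∈ Mb.S ∧ t ∈ Mb.S }

/-! ### Artifact-centric programs -/

/-- A declarative artifact-centric program. -/
structure ACProgram (D : Schema) (C : Type) {n : ℕ} (sig : Fin (n+1) → AgentSig) where
  /-- local database schemas, as sets of relation symbols -/
  locRel : Fin (n+1) → Set D.Rel
  locDisj : ∀ i j, i ≠ j → Disjoint (locRel i) (locRel j)
  /-- initial local states; their values are constants -/
  l0 : ∀ _ : Fin (n+1), Inst D C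
  l0_loc : ∀ i r, r ∉ locRel i → (l0 i).rel r = ∅
  /-- preconditions: FO-formulas over the local schema whose free variables
  are among the action parameters -/
  pre : ∀ i, (sig i).Act → FO D C
  /-- postconditions: FO-formulas over the global schema and its primed copy -/
  post : ∀ i, (sig i).Act → FO D.double C
  pre_free : ∀ i a, ↑(pre i a).free ⊆ { x : ℕ | x < (sig i).np a }
  post_free : ∀ i a, ↑(post i a).free ⊆ { x : ℕ | x < (sig i).np a }
  pre_loc : ∀ i a, (pre i a).UsesOnly (locRel i)

namespace ACProgram

variable {D : Schema} {C : Type} {n : ℕ} {sig : Fin (n+1) → AgentSig}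

/-- The constants mentioned in the program. -/
def progConsts (P : ACProgram D C sig) : Set C :=
  (⋃ i, (P.l0 i).adom) ∪
  ⋃ i, ⋃ a : (sig i).Act, ((P.pre i a).consts ∪ (P.post i a).consts)

/-- Ground values of the postcondition parameters of a joint ground action. -/
def postElems (P : ACProgram D C sig) {U : Type} (a : JAct sig U) : Set U :=
  { u | ∃ (i : Fin (n+1)) (j : Fin ((sig i).np (a i).1)),
      (j : ℕ) ∈ (P.post i (a i).1).free ∧ (a i).2 j = u }

/-- The agent induced by the program for index `i`. -/
def InducedAgent {U : Type} (cst : C → U) (P : ACProgram D C sig) (i : Fin (n+1))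
    (A : Agent D (sig i) U) : Prop :=
  A.L = { l : Inst D U | ∀ r, r ∉ P.locRel i → l.rel r = ∅ } ∧
  ∀ (l : Inst D U) (α : GAct (sig i) U), α ∈ A.Pr l ↔
    ∀ σ : ℕ → U, (∀ j : Fin ((sig i).np α.1), σ (j : ℕ) = α.2 j) →
      FO.sat cst l σ (P.pre i α.1)

/-- The transitions induced by the program. -/
def InducedTrans {U : Type} (cst : C → U) (P : ACProgram D C sig)
    (s t : GState D n U) (a : JAct sig U) : Prop :=
  (∀ i, ∀ σ : ℕ → U, (∀ j : Fin ((sig i).np (a i).1), σ (j : ℕ) = (a i).2 j) →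
      FO.sat cst (s i) σ (P.pre i (a i).1)) ∧
  adomF t ⊆ adomF s ∪ P.postElems a ∪ cst '' (⋃ i, (P.post i (a i).1).consts) ∧
  (∀ i, ∀ σ : ℕ → U, (∀ j : Fin ((sig i).np (a i).1), σ (j : ℕ) = (a i).2 j) →
      FO.sat cst ((gInst s).oplus (gInst t)) σ (P.post i (a i).1))

/-- `M` is the AC-MAS induced by the program `P` (the transition relation is
assumed to be serial). -/
def InducedACMAS {U : Type} (cst : C → U) (P : ACProgram D C sig)
    (Ag : ∀ i, Agent D (sig i) U) (M : ACMAS D sig Ag) : Prop :=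
  (∀ i, P.InducedAgent cst i (Ag i)) ∧
  M.s0 = (fun i => (P.l0 i).map cst) ∧
  (∀ s t a, t ∈ M.τ s a ↔ P.InducedTrans cst s t a) ∧
  M.Std

end ACProgram

namespace S15

open Set

variable {D : Schema} {C : Type} {n : ℕ} {W W' W'' : Type}

/-- extensionality for instances -/
lemma Inst.ext' {I J : Inst D W} (h : ∀ r, I.rel r = J.rel r) : I = J := by
  cases I; cases J
  have : ∀ {r1 r2 : ∀ r : D.Rel, Set (Fin (D.arity r) → W)}
      (h1 : ∀ r, (r1 r).Finite) (h2 : ∀ r, (r2 r).Finite), r1 = r2 →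
      Inst.mk r1 h1 = Inst.mk r2 h2 := by
    intro r1 r2 h1 h2 h; cases h; rfl
  exact this _ _ (funext h)

lemma adom_map (f : W → W') (I : Inst D W) : (I.map f).adom = f '' I.adom := by
  ext u
  constructor
  · rintro ⟨r, t, ⟨t0, ht0, rfl⟩, j, rfl⟩
    exact ⟨t0 j, ⟨r, t0, ht0, j, rfl⟩, rfl⟩
  · rintro ⟨v, ⟨r, t, ht, j, rfl⟩, rfl⟩
    exact ⟨r, f ∘ t, ⟨t, ht, rfl⟩, j, rfl⟩

lemma adomF_oplusG (s t : GState D n W) :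
    adomF (oplusG s t) = adomF s ∪ adomF t := by
  ext u
  simp only [adomF, mem_iUnion, mem_union]
  constructor
  · rintro ⟨i, r, tp, htp, j, rfl⟩
    cases r with
    | inl r => exact Or.inl ⟨i, r, tp, htp, j, rfl⟩
    | inr r => exact Or.inr ⟨i, r, tp, htp, j, rfl⟩
  · rintro (⟨i, r, tp, htp, j, rfl⟩ | ⟨i, r, tp, htp, j, rfl⟩)
    · exact ⟨i, Sum.inl r, tp, htp, j, rfl⟩
    · exact ⟨i, Sum.inr r, tp, htp, j, rfl⟩

lemma adom_gInst (s : GState D n W) : (gInst s).adom = adomF s := by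
  ext u
  constructor
  · rintro ⟨r, t, ht, j, rfl⟩
    obtain ⟨i, hti⟩ := mem_iUnion.1 ht
    exact mem_iUnion.2 ⟨i, r, t, hti, j, rfl⟩
  · intro hu
    obtain ⟨i, r, t, ht, j, rfl⟩ := mem_iUnion.1 hu
    exact ⟨r, t, mem_iUnion.2 ⟨i, ht⟩, j, rfl⟩

lemma adom_comp_subset {X : Type} (s : X → Inst D W) (i : X) : (s i).adom ⊆ adomF s :=
  subset_iUnion (fun i => (s i).adom) i

lemma mem_adom_of_mem_rel {I : Inst D W} {r : D.Rel} {t : Fin (D.arity r) → W}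
    (ht : t ∈ I.rel r) (j : Fin (D.arity r)) : t j ∈ I.adom := ⟨r, t, ht, j, rfl⟩

section Witness

variable {cstW : C → W} {cstW' : C → W'} {cstW'' : C → W''}

/-- a witness maps each component onto its image -/
lemma witness_map {γ : W → W'} {s : GState D n W} {s' : GState D n W'}
    (h : IsWitness cstW cstW' γ s s') (i : Fin (n+1)) : s' i = (s i).map γ := by
  obtain ⟨hbij, hc, hrel⟩ := h
  apply Inst.ext'
  intro r
  ext t'
  constructor
  · intro ht'
    have hent : ∀ j, t' j ∈ adomF s' ∪ Set.range cstW' := fun j =>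
      Or.inl (adom_comp_subset s' i (mem_adom_of_mem_rel ht' j))
    -- choose preimages
    have hpre : ∀ j, ∃ u ∈ adomF s ∪ Set.range cstW, γ u = t' j := fun j =>
      hbij.2.2 (hent j)
    choose u hu hgu using hpre
    have : u ∈ (s i).rel r := by
      rw [hrel i r u hu]
      have : (fun j => γ (u j)) = t' := funext hgu
      rw [this]; exact ht'
    exact ⟨u, this, funext fun j => (hgu j).symm ▸ rfl⟩
  · rintro ⟨t0, ht0, rfl⟩
    have hent : ∀ j, t0 j ∈ adomF s ∪ Set.range cstW := fun j =>
      Or.inl (adom_comp_subset s i (mem_adom_of_mem_rel ht0 j))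
    exact (hrel i r t0 hent).1 ht0

lemma witness_adomF_image {γ : W → W'} {s : GState D n W} {s' : GState D n W'}
    (h : IsWitness cstW cstW' γ s s') : adomF s' = γ '' adomF s := by
  have h1 : (fun j => (s' j).adom) = fun j => γ '' (s j).adom :=
    funext fun j => by rw [witness_map h j, adom_map]
  show (⋃ j, (s' j).adom) = _
  rw [h1, ← image_iUnion]
  rfl

lemma witness_bijOn_adomF {γ : W → W'} {s : GState D n W} {s' : GState D n W'}
    (h : IsWitness cstW cstW' γ s s') : Set.BijOn γ (adomF s) (adomF s') := by
  rw [witness_adomF_image h]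
  exact (h.1.injOn.mono (subset_union_left)).bijOn_image

lemma witness_comp {γ : W → W'} {κ : W' → W''} {s : GState D n W}
    {s' : GState D n W'} {s'' : GState D n W''}
    (h : IsWitness cstW cstW' γ s s') (h' : IsWitness cstW' cstW'' κ s' s'') :
    IsWitness cstW cstW'' (κ ∘ γ) s s'' := by
  refine ⟨h'.1.comp h.1, fun c => by simp [h.2.1 c, h'.2.1 c], ?_⟩
  intro i r t ht
  rw [h.2.2 i r t ht, h'.2.2 i r _ (fun j => h.1.mapsTo (ht j))]
  rfl

end Witness

end S15
namespace S15
open Set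
variable {D : Schema} {C : Type} {n : ℕ} {W W' W'' : Type}

section Witness2
variable {cstW : C → W} {cstW' : C → W'} {cstW'' : C → W''}

lemma witness_symm [Nonempty W] {γ : W → W'} {s : GState D n W} {s' : GState D n W'}
    (h : IsWitness cstW cstW' γ s s') :
    ∃ δ : W' → W, IsWitness cstW' cstW δ s' s ∧
      (∀ u ∈ adomF s ∪ Set.range cstW, δ (γ u) = u) ∧
      (∀ v ∈ adomF s' ∪ Set.range cstW', γ (δ v) = v) := by
  classical
  obtain ⟨hbij, hc, hrel⟩ := h
  set A := adomF s ∪ Set.range cstW with hA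
  set δ := Function.invFunOn γ A with hδ
  have hleft : ∀ u ∈ A, δ (γ u) = u := fun u hu => hbij.injOn.leftInvOn_invFunOn hu
  have hright : ∀ v ∈ adomF s' ∪ Set.range cstW', γ (δ v) = v := fun v hv =>
    hbij.surjOn.rightInvOn_invFunOn hv
  have hδmem : ∀ v ∈ adomF s' ∪ Set.range cstW', δ v ∈ A := fun v hv => by
    obtain ⟨u, hu, rfl⟩ := hbij.surjOn hv
    rw [hleft u hu]; exact hu
  have hbij' : Set.BijOn δ (adomF s' ∪ Set.range cstW') A :=
    hbij.symm ⟨fun v hv => hright v hv, fun u hu => hleft u hu⟩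
  refine ⟨δ, ⟨hbij', ?_, ?_⟩, hleft, hright⟩
  · intro c
    have : γ (cstW c) = cstW' c := hc c
    rw [← this, hleft _ (Or.inr ⟨c, rfl⟩)]
  · intro i r t ht
    have hmem : ∀ j, δ (t j) ∈ A := fun j => hδmem _ (ht j)
    have h2 := hrel i r (fun j => δ (t j)) hmem
    have h3 : (fun j => γ (δ (t j))) = t := funext fun j => hright _ (ht j)
    rw [h3] at h2
    exact h2.symm

/-- restriction of an ⊕-witness to the two component pairs -/
lemma witness_oplus_fst {γ : W → W'} {s t : GState D n W} {s' t' : GState D n W'}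
    (h : IsWitness cstW cstW' γ (oplusG s t) (oplusG s' t')) :
    IsWitness cstW cstW' γ s s' := by
  obtain ⟨hbij, hc, hrel⟩ := h
  have hmap : ∀ i, s' i = (s i).map γ := by
    intro i
    have := witness_map ⟨hbij, hc, hrel⟩ i
    have h2 : ((oplusG s t) i).map γ = ((s i).map γ).oplus ((t i).map γ) := by
      apply Inst.ext'; intro r
      cases r with
      | inl r => rfl
      | inr r => rfl
    rw [h2] at this
    apply Inst.ext'; intro r
    have := congrArg (fun I : Inst D.double W' => I.rel (Sum.inl r)) this
    exact this
  have himg : adomF s' = γ '' adomF s := by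
    have h1 : (fun j => (s' j).adom) = fun j => γ '' (s j).adom :=
      funext fun j => by rw [hmap j, adom_map]
    show (⋃ j, (s' j).adom) = _
    rw [h1, ← image_iUnion]; rfl
  have hsub : adomF s ∪ Set.range cstW ⊆ adomF (oplusG s t) ∪ Set.range cstW := by
    rw [adomF_oplusG]
    exact union_subset_union_left _ subset_union_left
  refine ⟨⟨?_, hbij.injOn.mono hsub, ?_⟩, hc, ?_⟩
  · rintro u (hu | hu)
    · exact Or.inl (himg ▸ mem_image_of_mem γ hu)
    · obtain ⟨c, rfl⟩ := hu; exact Or.inr ⟨c, (hc c).symm⟩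
  · rintro v (hv | hv)
    · rw [himg] at hv
      obtain ⟨u, hu, rfl⟩ := hv
      exact ⟨u, Or.inl hu, rfl⟩
    · obtain ⟨c, rfl⟩ := hv; exact ⟨cstW c, Or.inr ⟨c, rfl⟩, hc c⟩
  · intro i r tp htp
    have := hrel i (Sum.inl r) tp (fun j => hsub (htp j))
    exact this

lemma witness_oplus_swap {γ : W → W'} {s t : GState D n W} {s' t' : GState D n W'}
    (h : IsWitness cstW cstW' γ (oplusG s t) (oplusG s' t')) :
    IsWitness cstW cstW' γ (oplusG t s) (oplusG t' s') := by
  obtain ⟨hbij, hc, hrel⟩ := h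
  have e1 : adomF (oplusG t s) = adomF (oplusG s t) := by
    rw [adomF_oplusG, adomF_oplusG, union_comm]
  have e2 : adomF (oplusG t' s') = adomF (oplusG s' t') := by
    rw [adomF_oplusG, adomF_oplusG, union_comm]
  refine ⟨by rw [e1, e2]; exact hbij, hc, ?_⟩
  intro i r tp htp
  rw [e1] at htp
  cases r with
  | inl r => exact hrel i (Sum.inr r) tp htp
  | inr r => exact hrel i (Sum.inl r) tp htp

lemma witness_oplus_snd {γ : W → W'} {s t : GState D n W} {s' t' : GState D n W'}
    (h : IsWitness cstW cstW' γ (oplusG s t) (oplusG s' t')) :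
    IsWitness cstW cstW' γ t t' :=
  witness_oplus_fst (witness_oplus_swap h)

end Witness2
end S15
namespace S15
open Set
variable {D : Schema} {C : Type} {n : ℕ} {W W' W'' : Type}

/-- The core "equivalent assignment" data used throughout. -/
def EqG (cstW : C → W) (cstW' : C → W') (γ : W → W') (V : Set ℕ)
    (σ : ℕ → W) (σ' : ℕ → W') (s : GState D n W) (s' : GState D n W') : Prop :=
  Set.BijOn γ (adomF s ∪ Set.range cstW ∪ σ '' V)
      (adomF s' ∪ Set.range cstW' ∪ σ' '' V) ∧
  IsWitness cstW cstW' γ s s' ∧ ∀ x ∈ V, σ' x = γ (σ x)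

section EqGLemmas
variable {cstW : C → W} {cstW' : C → W'}

lemma EqG_of_witness {γ : W → W'} {s s'} (h : IsWitness cstW cstW' γ s s')
    (σ : ℕ → W) (σ' : ℕ → W') :
    EqG (D := D) (n := n) cstW cstW' γ ∅ σ σ' s s' := by
  refine ⟨?_, h, by simp⟩
  simpa using h.1

lemma EqG_symm [Nonempty W] {γ : W → W'} {V σ σ'} {s : GState D n W} {s' : GState D n W'}
    (h : EqG cstW cstW' γ V σ σ' s s') :
    ∃ δ : W' → W, EqG cstW' cstW δ V σ' σ s' s ∧
      (∀ u ∈ adomF s ∪ Set.range cstW ∪ σ '' V, δ (γ u) = u) ∧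
      (∀ v ∈ adomF s' ∪ Set.range cstW' ∪ σ' '' V, γ (δ v) = v) := by
  classical
  obtain ⟨hbij, hw, hσ⟩ := h
  set A := adomF s ∪ Set.range cstW ∪ σ '' V with hA
  set A' := adomF s' ∪ Set.range cstW' ∪ σ' '' V with hA'
  set δ := Function.invFunOn γ A with hδ
  have hleft : ∀ u ∈ A, δ (γ u) = u := fun u hu => hbij.injOn.leftInvOn_invFunOn hu
  have hright : ∀ v ∈ A', γ (δ v) = v := fun v hv => hbij.surjOn.rightInvOn_invFunOn hv
  have hδmem : ∀ v ∈ A', δ v ∈ A := fun v hv => by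
    obtain ⟨u, hu, rfl⟩ := hbij.surjOn hv
    rw [hleft u hu]; exact hu
  have hbij' : Set.BijOn δ A' A := hbij.symm ⟨fun v hv => hright v hv, fun u hu => hleft u hu⟩
  have hsubA : adomF s ∪ Set.range cstW ⊆ A := subset_union_left
  have hsubA' : adomF s' ∪ Set.range cstW' ⊆ A' := subset_union_left
  refine ⟨δ, ⟨hbij', ⟨?_, ?_, ?_⟩, ?_⟩, hleft, hright⟩
  · -- BijOn δ on witness sets
    have h1 := hw.1
    refine ⟨?_, hbij'.injOn.mono hsubA', ?_⟩
    · intro v hv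
      obtain ⟨u, hu, rfl⟩ := h1.surjOn hv
      rw [hleft u (hsubA hu)]; exact hu
    · intro u hu
      refine ⟨γ u, h1.mapsTo hu, hleft u (hsubA hu)⟩
  · intro c
    have : γ (cstW c) = cstW' c := hw.2.1 c
    rw [← this, hleft _ (hsubA (Or.inr ⟨c, rfl⟩))]
  · intro i r t ht
    have hmem : ∀ j, δ (t j) ∈ adomF s ∪ Set.range cstW := fun j => by
      obtain ⟨u, hu, he⟩ := hw.1.surjOn (ht j)
      rw [← he, hleft u (hsubA hu)]; exact hu
    have h2 := hw.2.2 i r (fun j => δ (t j)) hmem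
    have h3 : (fun j => γ (δ (t j))) = t := funext fun j => hright _ (hsubA' (ht j))
    rw [h3] at h2
    exact h2.symm
  · intro x hx
    rw [hσ x hx, hleft _ (Or.inr ⟨x, hx, rfl⟩)]

end EqGLemmas

/-- generic injection from a finite set into an infinite set -/
lemma exists_injOn_into {Z Y : Type} (B : Set Z) (hB : B.Finite) (T : Set Y)
    (hT : T.Infinite) : ∃ e : Z → Y, Set.InjOn e B ∧ e '' B ⊆ T := by
  classical
  have : Fintype B := hB.fintype
  let emb : B ↪ ↥T := ((Fintype.equivFin B).toEmbedding.trans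
    (Fin.valEmbedding)).trans (hT.natEmbedding)
  refine ⟨fun z => if h : z ∈ B then (emb ⟨z, h⟩ : Y) else (Set.Infinite.natEmbedding T hT 0).1,
    ?_, ?_⟩
  · intro x hx y hy hxy
    simp only [dif_pos hx, dif_pos hy] at hxy
    have := emb.injective (Subtype.ext hxy)
    exact congrArg Subtype.val this
  · rintro y ⟨z, hz, rfl⟩
    simp only [dif_pos hz]
    exact (emb ⟨z, hz⟩).2

/-- generic injection from a finite set into the complement of a small set in a fintype -/
lemma exists_injOn_avoid_fin {Z Y : Type} [Fintype Y] [Nonempty Y] (B : Set Z)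
    (hB : B.Finite) (A' : Set Y) (hcard : B.ncard + A'.ncard ≤ Fintype.card Y) :
    ∃ e : Z → Y, Set.InjOn e B ∧ Disjoint (e '' B) A' := by
  classical
  have : Fintype B := hB.fintype
  have hcB : Fintype.card B = B.ncard := by
    rw [← Nat.card_coe_set_eq, Nat.card_eq_fintype_card]
  have hcA : Fintype.card A' = A'.ncard := by
    rw [← Nat.card_coe_set_eq, Nat.card_eq_fintype_card]
  have hcompl : Fintype.card (↥(A'ᶜ)) = Fintype.card Y - A'.ncard := by
    rw [Fintype.card_compl_set, hcA]
  have hle : Fintype.card B ≤ Fintype.card (↥(A'ᶜ)) := by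
    rw [hcB, hcompl]; omega
  obtain ⟨emb⟩ := Function.Embedding.nonempty_of_card_le hle
  refine ⟨fun z => if h : z ∈ B then (emb ⟨z, h⟩ : Y) else Classical.arbitrary Y, ?_, ?_⟩
  · intro x hx y hy hxy
    simp only [dif_pos hx, dif_pos hy] at hxy
    have := emb.injective (Subtype.ext hxy)
    exact congrArg Subtype.val this
  · rw [Set.disjoint_left]
    rintro y ⟨z, hz, rfl⟩
    simp only [dif_pos hz]
    exact (emb ⟨z, hz⟩).2

/-- dependent-choice style chain construction -/
lemma chain {α : Type} (Q : ℕ → α → Prop) (R : ℕ → α → α → Prop) (a0 : α)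
    (h0 : Q 0 a0) (hs : ∀ k a, Q k a → ∃ b, Q (k+1) b ∧ R k a b) :
    ∃ f : ℕ → α, f 0 = a0 ∧ (∀ k, Q k (f k)) ∧ ∀ k, R k (f k) (f (k+1)) := by
  classical
  let g : ∀ k : ℕ, {a : α // Q k a} := fun k =>
    Nat.rec ⟨a0, h0⟩ (fun k p => ⟨(hs k p.1 p.2).choose, (hs k p.1 p.2).choose_spec.1⟩) k
  refine ⟨fun k => (g k).1, rfl, fun k => (g k).2, fun k => ?_⟩
  exact (hs k (g k).1 (g k).2).choose_spec.2

end S15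
namespace S15
open Set
variable {D : Schema} {C : Type} {n : ℕ} {W W' : Type}

/-- The push lemma: transport a second state across an equivalent-assignment pair. -/
lemma push {cstW : C → W} {cstW' : C → W'} {γ : W → W'} {V : Set ℕ} {σ : ℕ → W}
    {σ' : ℕ → W'} {s : GState D n W} {s' : GState D n W'}
    (h : EqG cstW cstW' γ V σ σ' s s') (t : GState D n W) (e : W → W')
    (he : Set.InjOn e (adomF t \ (adomF s ∪ Set.range cstW ∪ σ '' V)))
    (hed : Disjoint (e '' (adomF t \ (adomF s ∪ Set.range cstW ∪ σ '' V)))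
      (adomF s' ∪ Set.range cstW' ∪ σ' '' V)) :
    ∃ (t' : GState D n W') (γ₂ : W → W'),
      (∀ u ∈ adomF s ∪ Set.range cstW ∪ σ '' V, γ₂ u = γ u) ∧
      (∀ i, t' i = (t i).map γ₂) ∧
      IsWitness cstW cstW' γ₂ (oplusG s t) (oplusG s' t') ∧
      EqG cstW cstW' γ₂ V σ σ' t t' := by
  classical
  obtain ⟨hbij, hw, hσ⟩ := h
  set A := adomF s ∪ Set.range cstW ∪ σ '' V with hA
  set A' := adomF s' ∪ Set.range cstW' ∪ σ' '' V with hA'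
  set B := adomF t \ A with hB
  set γ₂ := fun u => if u ∈ A then γ u else e u with hγ₂
  set t' : GState D n W' := fun i => (t i).map γ₂ with ht'
  have hagree : ∀ u ∈ A, γ₂ u = γ u := fun u hu => if_pos hu
  have hBe : ∀ u ∈ B, γ₂ u = e u := fun u hu => if_neg hu.2
  have hsA : adomF s ∪ Set.range cstW ⊆ A := subset_union_left
  have hsA' : adomF s' ∪ Set.range cstW' ⊆ A' := subset_union_left
  have hAimg : γ₂ '' A = A' := by
    rw [Set.image_congr hagree]; exact hbij.image_eq
  have hadomimg : adomF s' = γ '' adomF s := witness_adomF_image hw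
  have himgT : adomF t' = γ₂ '' adomF t := by
    have h1 : (fun j => (t' j).adom) = fun j => γ₂ '' (t j).adom :=
      funext fun j => adom_map γ₂ (t j)
    show (⋃ j, (t' j).adom) = _
    rw [h1, ← image_iUnion]; rfl
  have hcases : ∀ u ∈ A ∪ adomF t, u ∈ A ∨ u ∈ B := by
    intro u hu
    by_cases h : u ∈ A
    · exact Or.inl h
    · rcases hu with hu | hu
      · exact absurd hu h
      · exact Or.inr ⟨hu, h⟩
  have hinj : Set.InjOn γ₂ (A ∪ adomF t) := by
    intro u hu v hv huv
    rcases hcases u hu with hu' | hu' <;> rcases hcases v hv with hv' | hv'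
    · exact hbij.injOn hu' hv' (by rwa [hagree u hu', hagree v hv'] at huv)
    · exfalso
      rw [hagree u hu', hBe v hv'] at huv
      exact (Set.disjoint_left.1 hed) ⟨v, hv', huv.symm⟩ (hAimg ▸ ⟨u, hu', hagree u hu'⟩)
    · exfalso
      rw [hagree v hv', hBe u hu'] at huv
      exact (Set.disjoint_left.1 hed) ⟨u, hu', huv⟩ (hAimg ▸ ⟨v, hv', hagree v hv'⟩)
    · exact he hu' hv' (by rwa [hBe u hu', hBe v hv'] at huv)
  have hmemT : ∀ u ∈ adomF t, γ₂ u ∈ adomF t' := fun u hu => himgT ▸ ⟨u, hu, rfl⟩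
  have hconst : ∀ c, γ₂ (cstW c) = cstW' c := fun c => by
    rw [hagree _ (hsA (Or.inr ⟨c, rfl⟩))]; exact hw.2.1 c
  have hsubT : adomF t ∪ Set.range cstW ∪ σ '' V ⊆ A ∪ adomF t := by
    rintro u ((hu | hu) | hu)
    · exact Or.inr hu
    · exact Or.inl (hsA (Or.inr hu))
    · exact Or.inl (Or.inr hu)
  have hkey : ∀ (i : Fin (n+1)) (r : D.Rel) (tp : Fin (D.arity r) → W),
      (∀ j, tp j ∈ A ∪ adomF t) →
      ((fun j => γ₂ (tp j)) ∈ (s' i).rel r → ∀ j, tp j ∈ adomF s ∪ Set.range cstW) := by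
    intro i r tp htp hmem j
    by_contra hj
    have h1 : γ₂ (tp j) ∈ adomF s' ∪ Set.range cstW' :=
      Or.inl (adom_comp_subset s' i (mem_adom_of_mem_rel hmem j))
    rcases hcases _ (htp j) with hu | hu
    · rw [hagree _ hu] at h1
      obtain ⟨w, hww, hwe⟩ := hw.1.surjOn h1
      have : w = tp j := hbij.injOn (hsA hww) hu hwe
      exact hj (this ▸ hww)
    · exact (Set.disjoint_left.1 hed) ⟨tp j, hu, (hBe _ hu).symm⟩ (hsA' h1)
  have hrelT : ∀ (i : Fin (n+1)) (r : D.Rel) (tp : Fin (D.arity r) → W),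
      (∀ j, tp j ∈ A ∪ adomF t) →
      (tp ∈ (t i).rel r ↔ (fun j => γ₂ (tp j)) ∈ (t' i).rel r) := by
    intro i r tp htp
    constructor
    · intro h1; exact ⟨tp, h1, rfl⟩
    · rintro ⟨tp₂, htp₂, heq⟩
      have : tp₂ = tp := funext fun j =>
        hinj (Or.inr (adom_comp_subset t i (mem_adom_of_mem_rel htp₂ j))) (htp j)
          (congrFun heq j)
      exact this ▸ htp₂
  have hrelS : ∀ (i : Fin (n+1)) (r : D.Rel) (tp : Fin (D.arity r) → W),
      (∀ j, tp j ∈ A ∪ adomF t) →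
      (tp ∈ (s i).rel r ↔ (fun j => γ₂ (tp j)) ∈ (s' i).rel r) := by
    intro i r tp htp
    by_cases hall : ∀ j, tp j ∈ adomF s ∪ Set.range cstW
    · have heq : (fun j => γ₂ (tp j)) = fun j => γ (tp j) :=
        funext fun j => hagree _ (hsA (hall j))
      rw [heq]
      exact hw.2.2 i r tp hall
    · push_neg at hall
      obtain ⟨j0, hj0⟩ := hall
      constructor
      · intro h1
        exact absurd (Or.inl (adom_comp_subset s i (mem_adom_of_mem_rel h1 j0))) hj0
      · intro h1
        exact absurd (hkey i r tp htp h1 j0) hj0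
  refine ⟨t', γ₂, hagree, fun i => rfl, ⟨?_, hconst, ?_⟩, ?_, ⟨?_, hconst, ?_⟩, ?_⟩
  · -- BijOn for the oplus witness
    rw [adomF_oplusG, adomF_oplusG]
    refine ⟨?_, ?_, ?_⟩
    · rintro u ((hu | hu) | hu)
      · refine Or.inl (Or.inl ?_)
        rw [hagree _ (hsA (Or.inl hu)), hadomimg]
        exact ⟨u, hu, rfl⟩
      · exact Or.inl (Or.inr (hmemT u hu))
      · obtain ⟨c, rfl⟩ := hu
        exact Or.inr ⟨c, (hconst c).symm⟩
    · intro u hu v hv huv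
      refine hinj ?_ ?_ huv
      · rcases hu with (hu | hu) | hu
        · exact Or.inl (hsA (Or.inl hu))
        · exact Or.inr hu
        · exact Or.inl (hsA (Or.inr hu))
      · rcases hv with (hv | hv) | hv
        · exact Or.inl (hsA (Or.inl hv))
        · exact Or.inr hv
        · exact Or.inl (hsA (Or.inr hv))
    · rintro v ((hv | hv) | hv)
      · rw [hadomimg] at hv
        obtain ⟨u, hu, rfl⟩ := hv
        exact ⟨u, Or.inl (Or.inl hu), hagree _ (hsA (Or.inl hu))⟩
      · rw [himgT] at hv
        obtain ⟨u, hu, rfl⟩ := hv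
        exact ⟨u, Or.inl (Or.inr hu), rfl⟩
      · obtain ⟨c, rfl⟩ := hv
        exact ⟨cstW c, Or.inr ⟨c, rfl⟩, hconst c⟩
  · -- relations for the oplus witness
    intro i r tp htp
    rw [adomF_oplusG] at htp
    have htp' : ∀ j, tp j ∈ A ∪ adomF t := by
      intro j
      rcases htp j with (h1 | h1) | h1
      · exact Or.inl (hsA (Or.inl h1))
      · exact Or.inr h1
      · exact Or.inl (hsA (Or.inr h1))
    cases r with
    | inl r => exact hrelS i r tp htp'
    | inr r => exact hrelT i r tp htp'
  · -- BijOn for EqG on (t, t')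
    refine ⟨?_, hinj.mono hsubT, ?_⟩
    · rintro u ((hu | hu) | hu)
      · exact Or.inl (Or.inl (hmemT u hu))
      · obtain ⟨c, rfl⟩ := hu
        exact Or.inl (Or.inr ⟨c, (hconst c).symm⟩)
      · obtain ⟨x, hx, rfl⟩ := hu
        refine Or.inr ⟨x, hx, ?_⟩
        rw [hagree _ (Or.inr ⟨x, hx, rfl⟩), ← hσ x hx]
    · rintro v ((hv | hv) | hv)
      · rw [himgT] at hv
        obtain ⟨u, hu, rfl⟩ := hv
        exact ⟨u, Or.inl (Or.inl hu), rfl⟩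
      · obtain ⟨c, rfl⟩ := hv
        exact ⟨cstW c, Or.inl (Or.inr ⟨c, rfl⟩), hconst c⟩
      · obtain ⟨x, hx, rfl⟩ := hv
        refine ⟨σ x, Or.inr ⟨x, hx, rfl⟩, ?_⟩
        rw [hagree _ (Or.inr ⟨x, hx, rfl⟩), ← hσ x hx]
  · -- BijOn for the witness on (t, t')
    refine ⟨?_, ?_, ?_⟩
    · rintro u (hu | hu)
      · exact Or.inl (hmemT u hu)
      · obtain ⟨c, rfl⟩ := hu
        exact Or.inr ⟨c, (hconst c).symm⟩
    · refine hinj.mono fun u hu => ?_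
      rcases hu with h1 | h1
      · exact Or.inr h1
      · exact Or.inl (hsA (Or.inr h1))
    · rintro v (hv | hv)
      · rw [himgT] at hv
        obtain ⟨u, hu, rfl⟩ := hv
        exact ⟨u, Or.inl hu, rfl⟩
      · obtain ⟨c, rfl⟩ := hv
        exact ⟨cstW c, Or.inr ⟨c, rfl⟩, hconst c⟩
  · -- relations for the witness on (t, t')
    intro i r tp htp
    refine hrelT i r tp fun j => ?_
    rcases htp j with h1 | h1
    · exact Or.inr h1
    · exact Or.inl (hsA (Or.inr h1))
  · intro x hx
    rw [hagree _ (Or.inr ⟨x, hx, rfl⟩)]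
    exact hσ x hx

end S15
namespace S15
open Set
variable {D : Schema} {C : Type} {n : ℕ} {W W' : Type}

/-- Equivalent-assignment data at the level of single instances. -/
def EqI (cstW : C → W) (cstW' : C → W') (γ : W → W') (V : Set ℕ)
    (σ : ℕ → W) (σ' : ℕ → W') (I : Inst D W) (I' : Inst D W') : Prop :=
  Set.BijOn γ (I.adom ∪ Set.range cstW) (I'.adom ∪ Set.range cstW') ∧
  Set.BijOn γ (I.adom ∪ Set.range cstW ∪ σ '' V)
    (I'.adom ∪ Set.range cstW' ∪ σ' '' V) ∧
  (∀ c, γ (cstW c) = cstW' c) ∧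
  (∀ (r : D.Rel) (t : Fin (D.arity r) → W), (∀ j, t j ∈ I.adom ∪ Set.range cstW) →
    (t ∈ I.rel r ↔ (fun j => γ (t j)) ∈ I'.rel r)) ∧
  ∀ x ∈ V, σ' x = γ (σ x)

section EqI
variable {cstW : C → W} {cstW' : C → W'} {γ : W → W'} {V : Set ℕ}
  {σ : ℕ → W} {σ' : ℕ → W'} {I : Inst D W} {I' : Inst D W'}

lemma EqI_adom (h : EqI cstW cstW' γ V σ σ' I I') : Set.BijOn γ I.adom I'.adom := by
  obtain ⟨h1, _, _, hrel, _⟩ := h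
  refine ⟨?_, h1.injOn.mono subset_union_left, ?_⟩
  · rintro u ⟨r, t, ht, j, rfl⟩
    have := (hrel r t fun j => Or.inl (mem_adom_of_mem_rel ht j)).1 ht
    exact mem_adom_of_mem_rel this j
  · rintro v ⟨r, t, ht, j, rfl⟩
    have hpre : ∀ j, ∃ u ∈ I.adom ∪ Set.range cstW, γ u = t j := fun j =>
      h1.surjOn (Or.inl (mem_adom_of_mem_rel ht j))
    choose u hu hgu using hpre
    have hmem : u ∈ I.rel r := by
      rw [hrel r u hu]
      have : (fun j => γ (u j)) = t := funext hgu
      rw [this]; exact ht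
    exact ⟨u j, mem_adom_of_mem_rel hmem j, hgu j⟩

lemma EqI_of_EqG {s : GState D n W} {s' : GState D n W'}
    (h : EqG cstW cstW' γ V σ σ' s s') :
    EqI cstW cstW' γ V σ σ' (gInst s) (gInst s') := by
  obtain ⟨hbij, hw, hσ⟩ := h
  rw [EqI, adom_gInst, adom_gInst]
  refine ⟨hw.1, hbij, hw.2.1, ?_, hσ⟩
  intro r t ht
  constructor
  · intro h1
    obtain ⟨i, hi⟩ := mem_iUnion.1 h1
    exact mem_iUnion.2 ⟨i, (hw.2.2 i r t ht).1 hi⟩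
  · intro h1
    obtain ⟨i, hi⟩ := mem_iUnion.1 h1
    exact mem_iUnion.2 ⟨i, (hw.2.2 i r t ht).2 hi⟩

/-- transfer of FO satisfaction along equivalent assignments -/
lemma fo_transfer (ψ : FO D C) : ∀ (V : Set ℕ), ↑ψ.vars ⊆ V →
    ∀ (γ : W → W') (σ : ℕ → W) (σ' : ℕ → W') (I : Inst D W) (I' : Inst D W'),
    EqI cstW cstW' γ V σ σ' I I' →
    (FO.sat cstW I σ ψ ↔ FO.sat cstW' I' σ' ψ) := by
  induction ψ with
  | eq t₁ t₂ =>
    intro V hv γ σ σ' I I' h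
    obtain ⟨h1, h2, hc, hrel, hσ⟩ := h
    have hval : ∀ tm : Term C, ↑tm.varsF ⊆ V →
        (Term.val cstW σ tm ∈ I.adom ∪ Set.range cstW ∪ σ '' V) ∧
        Term.val cstW' σ' tm = γ (Term.val cstW σ tm) := by
      rintro (x | c) hsub
      · have hx : x ∈ V := hsub (by simp [Term.varsF])
        exact ⟨Or.inr ⟨x, hx, rfl⟩, hσ x hx⟩
      · exact ⟨Or.inl (Or.inr ⟨c, rfl⟩), (hc c).symm⟩
    have hv1 : ↑(Term.varsF t₁) ⊆ V := fun x hx => hv (by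
      simp only [FO.vars, Finset.coe_union, Set.mem_union]; exact Or.inl hx)
    have hv2 : ↑(Term.varsF t₂) ⊆ V := fun x hx => hv (by
      simp only [FO.vars, Finset.coe_union, Set.mem_union]; exact Or.inr hx)
    simp only [FO.sat]
    rw [(hval t₁ hv1).2, (hval t₂ hv2).2]
    constructor
    · intro h; rw [h]
    · intro h; exact h2.injOn (hval t₁ hv1).1 (hval t₂ hv2).1 h
  | rel r ts =>
    intro V hv γ σ σ' I I' h
    obtain ⟨h1, h2, hc, hrel, hσ⟩ := h
    have hval : ∀ j, (Term.val cstW σ (ts j) ∈ I.adom ∪ Set.range cstW ∪ σ '' V) ∧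
        Term.val cstW' σ' (ts j) = γ (Term.val cstW σ (ts j)) := by
      intro j
      have hsub : ↑(Term.varsF (ts j)) ⊆ V := fun x hx => hv (by
        simp only [FO.vars, Finset.coe_biUnion, Finset.coe_univ, Set.mem_iUnion]
        exact ⟨j, trivial, hx⟩)
      cases hts : ts j with
      | inl x =>
        rw [hts] at hsub
        have hx : x ∈ V := hsub (by simp [Term.varsF])
        exact ⟨Or.inr ⟨x, hx, rfl⟩, hσ x hx⟩
      | inr c =>
        exact ⟨Or.inl (Or.inr ⟨c, rfl⟩), (hc c).symm⟩
    simp only [FO.sat]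
    have heq : (fun j => Term.val cstW' σ' (ts j)) =
        fun j => γ (Term.val cstW σ (ts j)) := funext fun j => (hval j).2
    rw [heq]
    by_cases hall : ∀ j, Term.val cstW σ (ts j) ∈ I.adom ∪ Set.range cstW
    · exact hrel r _ hall
    · push_neg at hall
      obtain ⟨j0, hj0⟩ := hall
      constructor
      · intro hmem
        exact absurd (Or.inl (mem_adom_of_mem_rel hmem j0)) hj0
      · intro hmem
        exfalso
        have hin : γ (Term.val cstW σ (ts j0)) ∈ I'.adom ∪ Set.range cstW' :=
          Or.inl (mem_adom_of_mem_rel hmem j0)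
        obtain ⟨w, hw, hwe⟩ := h1.surjOn hin
        have : w = Term.val cstW σ (ts j0) :=
          h2.injOn (subset_union_left hw) (hval j0).1 hwe
        exact hj0 (this ▸ hw)
  | not ψ ih =>
    intro V hv γ σ σ' I I' h
    simp only [FO.sat]
    rw [ih V hv γ σ σ' I I' h]
  | imp ψ₁ ψ₂ ih₁ ih₂ =>
    intro V hv γ σ σ' I I' h
    have hv1 : ↑ψ₁.vars ⊆ V := fun x hx => hv (by
      simp only [FO.vars, Finset.coe_union, Set.mem_union]; exact Or.inl hx)
    have hv2 : ↑ψ₂.vars ⊆ V := fun x hx => hv (by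
      simp only [FO.vars, Finset.coe_union, Set.mem_union]; exact Or.inr hx)
    simp only [FO.sat]
    rw [ih₁ V hv1 γ σ σ' I I' h, ih₂ V hv2 γ σ σ' I I' h]
  | all x ψ ih =>
    intro V hv γ σ σ' I I' h
    have hx : x ∈ V := hv (by simp [FO.vars])
    have hvψ : ↑ψ.vars ⊆ V := fun y hy => hv (by
      simp only [FO.vars, Finset.coe_insert, Set.mem_insert_iff]; exact Or.inr hy)
    have hupdate : ∀ u ∈ I.adom,
        EqI cstW cstW' γ V (Function.update σ x u) (Function.update σ' x (γ u)) I I' := by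
      intro u hu
      obtain ⟨h1, h2, hc, hrel, hσ⟩ := h
      refine ⟨h1, ⟨?_, ?_, ?_⟩, hc, hrel, ?_⟩
      · rintro w (hw | ⟨y, hy, rfl⟩)
        · rcases h1.mapsTo hw with hw' | hw'
          · exact Or.inl (Or.inl hw')
          · exact Or.inl (Or.inr hw')
        · by_cases hyx : y = x
          · subst hyx
            refine Or.inr ⟨y, hy, ?_⟩
            simp [Function.update_self]
          · refine Or.inr ⟨y, hy, ?_⟩
            rw [Function.update_of_ne hyx, Function.update_of_ne hyx]
            exact hσ y hy
      · refine h2.injOn.mono ?_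
        rintro w (hw | ⟨y, hy, rfl⟩)
        · exact Or.inl hw
        · by_cases hyx : y = x
          · subst hyx
            rw [Function.update_self]
            exact Or.inl (Or.inl hu)
          · rw [Function.update_of_ne hyx]
            exact Or.inr ⟨y, hy, rfl⟩
      · rintro v (hv' | ⟨y, hy, rfl⟩)
        · obtain ⟨w, hw, hwe⟩ := h1.surjOn hv'
          exact ⟨w, Or.inl hw, hwe⟩
        · by_cases hyx : y = x
          · subst hyx
            refine ⟨u, Or.inr ⟨y, hy, Function.update_self ..⟩, ?_⟩
            simp [Function.update_self]
          · rw [Function.update_of_ne hyx]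
            refine ⟨σ y, Or.inr ⟨y, hy, Function.update_of_ne hyx ..⟩, ?_⟩
            exact (hσ y hy).symm
      · intro y hy
        by_cases hyx : y = x
        · subst hyx; simp [Function.update_self]
        · rw [Function.update_of_ne hyx, Function.update_of_ne hyx]
          exact hσ y hy
    simp only [FO.sat]
    constructor
    · intro hs u' hu'
      obtain ⟨u, hu, rfl⟩ := (EqI_adom h).surjOn hu'
      exact (ih V hvψ γ _ _ I I' (hupdate u hu)).1 (hs u hu)
    · intro hs u hu
      exact (ih V hvψ γ _ _ I I' (hupdate u hu)).2 (hs (γ u) ((EqI_adom h).mapsTo hu))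

end EqI
end S15
namespace S15
open Set

lemma extend_injOn {X Y : Type} {f : X → Y} {A B : Set X} (hf : Set.InjOn f A)
    (e : X → Y) (he : Set.InjOn e (B \ A)) (hed : Disjoint (e '' (B \ A)) (f '' A)) :
    ∃ g : X → Y, (∀ u ∈ A, g u = f u) ∧ Set.InjOn g (A ∪ B) := by
  classical
  refine ⟨fun u => if u ∈ A then f u else e u, fun u hu => if_pos hu, ?_⟩
  have hcases : ∀ u ∈ A ∪ B, u ∈ A ∨ u ∈ B \ A := by
    intro u hu
    by_cases h : u ∈ A
    · exact Or.inl h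
    · rcases hu with hu | hu
      · exact absurd hu h
      · exact Or.inr ⟨hu, h⟩
  intro u hu v hv huv
  have huv' : (if u ∈ A then f u else e u) = (if v ∈ A then f v else e v) := huv
  clear huv
  rcases hcases u hu with hu' | hu' <;> rcases hcases v hv with hv' | hv'
  · rw [if_pos hu', if_pos hv'] at huv'; exact hf hu' hv' huv'
  · rw [if_pos hu', if_neg hv'.2] at huv'
    exact absurd (⟨u, hu', huv'⟩ : e v ∈ f '' A)
      fun h => (Set.disjoint_left.1 hed) ⟨v, hv', rfl⟩ h
  · rw [if_neg hu'.2, if_pos hv'] at huv'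
    exact absurd (⟨v, hv', huv'.symm ▸ rfl⟩ : e u ∈ f '' A)
      fun h => (Set.disjoint_left.1 hed) ⟨u, hu', rfl⟩ h
  · rw [if_neg hu'.2, if_neg hv'.2] at huv'; exact he hu' hv' huv'

lemma actElems_finite {n : ℕ} {sig : Fin (n+1) → AgentSig} {U : Type}
    (a : JAct sig U) : (actElems a).Finite := by
  have hsub : actElems a ⊆ ⋃ i, Set.range (a i).2 := by
    rintro u ⟨i, j, rfl⟩
    exact mem_iUnion.2 ⟨i, j, rfl⟩
  exact (Set.finite_iUnion fun i => Set.finite_range fun j => (a i).2 j).subset hsub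

section Abs

variable {D : Schema} {C : Type} {n : ℕ} {sig : Fin (n+1) → AgentSig}
  {U : Type} [Infinite U] {cst : C → U} {Ag : ∀ i, Agent D (sig i) U}
  {M : ACMAS D sig Ag} {b : ℕ}

/-- every witness-isomorphic copy of a reachable state is reachable -/
lemma S_iso_closed [Finite C] (hM : M.Std) (hu : Uniform cst M) (hb : BBounded M b)
    (h0 : adomF M.s0 ⊆ Set.range cst) :
    ∀ s ∈ M.S, ∀ sH, (∃ γ, IsWitness cst cst γ s sH) → sH ∈ M.S := by
  have hreach : ∀ s ∈ M.S, Relation.ReflTransGen M.Tr M.s0 s := by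
    intro s hs; rw [hM.2] at hs; exact hs
  intro s hs
  have h := hreach s hs
  clear hs
  induction h with
  | refl =>
    rintro sH ⟨γ, hw⟩
    -- sH = s0
    have hfix : ∀ u ∈ Set.range cst, γ u = u := by
      rintro u ⟨c, rfl⟩; exact hw.2.1 c
    have hA : adomF M.s0 ∪ Set.range cst = Set.range cst :=
      union_eq_self_of_subset_left h0
    have hrange : γ '' Set.range cst = Set.range cst := by
      apply Subset.antisymm
      · rintro v ⟨u, hu, rfl⟩; rw [hfix u hu]; exact hu
      · rintro v hv; exact ⟨v, hv, hfix v hv⟩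
    have hA' : adomF sH ∪ Set.range cst = Set.range cst := by
      have := hw.1.image_eq
      rw [hA, hrange] at this
      exact this.symm
    have hsub' : adomF sH ⊆ Set.range cst := by
      rw [← hA']; exact subset_union_left
    have : sH = M.s0 := by
      funext i
      apply Inst.ext'
      intro r
      ext tp
      have hiff : ∀ tp : Fin (D.arity r) → U, (∀ j, tp j ∈ Set.range cst) →
          (tp ∈ (M.s0 i).rel r ↔ tp ∈ (sH i).rel r) := by
        intro tp htp
        have h1 := hw.2.2 i r tp (fun j => Or.inr (htp j))
        have h2 : (fun j => γ (tp j)) = tp := funext fun j => hfix _ (htp j)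
        rw [h2] at h1
        exact h1
      constructor
      · intro h1
        have htp : ∀ j, tp j ∈ Set.range cst := fun j =>
          hsub' (adom_comp_subset sH i (mem_adom_of_mem_rel h1 j))
        exact (hiff tp htp).2 h1
      · intro h1
        have htp : ∀ j, tp j ∈ Set.range cst := fun j =>
          h0 (adom_comp_subset M.s0 i (mem_adom_of_mem_rel h1 j))
        exact (hiff tp htp).1 h1
    rw [this]
    exact M.s0_mem
  | @tail s t hreach0 hstep ih =>
    rintro tH ⟨κ, hκ⟩
    have hsS : s ∈ M.S := by rw [hM.2]; exact hreach0
    obtain ⟨a, hta⟩ := hstep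
    have htS : t ∈ M.S := M.tau_closed s hsS a hta
    -- push s across (t, tH)
    have hEq : EqG cst cst κ ∅ (fun _ => Classical.arbitrary U)
        (fun _ => Classical.arbitrary U) t tH := EqG_of_witness hκ _ _
    have htfin : (adomF t).Finite := (hb t htS).1
    have hsfin : (adomF s).Finite := (hb s hsS).1
    have htHfin : (adomF tH).Finite := by
      rw [witness_adomF_image hκ]; exact htfin.image κ
    have hrC : (Set.range cst).Finite := Set.finite_range cst
    obtain ⟨e, he, heT⟩ := exists_injOn_into
      (adomF s \ (adomF t ∪ Set.range cst ∪ (fun _ => Classical.arbitrary U) '' ∅))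
      (hsfin.subset diff_subset)
      ((adomF tH ∪ Set.range cst ∪ (fun _ => Classical.arbitrary U) '' ∅)ᶜ)
      (Set.Finite.infinite_compl (by simp [htHfin, hrC]))
    obtain ⟨sH, γ₂, hagree, hmap, hwit, hEq2⟩ := push hEq s e he
      (Set.disjoint_left.2 fun v hv hvmem => (heT hv) hvmem)
    have hsHS : sH ∈ M.S := ih sH ⟨γ₂, hEq2.2.1⟩
    -- swap the oplus witness
    have hwit' : IsWitness cst cst γ₂ (oplusG s t) (oplusG sH tH) := witness_oplus_swap hwit
    -- extend γ₂ to the action parameters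
    have hAfin : (adomF (oplusG s t) ∪ Set.range cst).Finite := by
      rw [adomF_oplusG]
      exact ((hsfin.union htfin).union hrC)
    obtain ⟨e2, he2, he2T⟩ := exists_injOn_into
      (actElems a \ (adomF (oplusG s t) ∪ Set.range cst))
      ((actElems_finite a).subset diff_subset)
      ((γ₂ '' (adomF (oplusG s t) ∪ Set.range cst))ᶜ)
      (Set.Finite.infinite_compl (hAfin.image γ₂))
    obtain ⟨ι', hι'agree, hι'inj⟩ := extend_injOn hwit'.1.injOn e2 he2
      (Set.disjoint_left.2 fun v hv hvmem => (he2T hv) hvmem)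
    have htHτ : tH ∈ M.τ sH (JAct.map ι' a) := by
      refine hu.1 s hsS t htS sH hsHS tH a hta γ₂ hwit' ι' hι'agree ?_ ?_
      · exact hι'inj
      · intro c
        rw [hι'agree _ (Or.inr ⟨c, rfl⟩)]
        exact hwit'.2.1 c
    exact M.tau_closed sH hsHS _ htHτ

end Abs
end S15
set_option linter.unusedSectionVars false

namespace S15
open Set

section AbsDef

variable {D : Schema} {C : Type} {n : ℕ} {sig : Fin (n+1) → AgentSig}
  {U : Type} {W' : Type}

/-- trivial agents over the abstract domain -/
def trivAg (D : Schema) {n : ℕ} (sig : Fin (n+1) → AgentSig) (W' : Type)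
    (i : Fin (n+1)) : Agent D (sig i) W' := ⟨Set.univ, fun _ => Set.univ⟩

variable {Ag : ∀ i, Agent D (sig i) U}

/-- states of the abstraction -/
def absS (cst : C → U) (cst' : C → W') (M : ACMAS D sig Ag) : Set (GState D n W') :=
  {s' | ∃ s ∈ M.S, ∃ γ, IsWitness cst cst' γ s s'}

/-- transitions of the abstraction -/
def absT (cst : C → U) (cst' : C → W') (M : ACMAS D sig Ag)
    (s' t' : GState D n W') : Prop :=
  ∃ s ∈ M.S, ∃ t ∈ M.S, (∃ a, t ∈ M.τ s a) ∧
    ∃ γ, IsWitness cst cst' γ (oplusG s t) (oplusG s' t')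

/-- the abstract AC-MAS -/
def absM (cst : C → U) (cst' : C → W') (M : ACMAS D sig Ag) (s0' : GState D n W')
    (h : s0' ∈ absS cst cst' M) : ACMAS D sig (trivAg D sig W') where
  S := absS cst cst' M
  s0 := s0'
  s0_mem := h
  states_local := fun _ _ _ => Set.mem_univ _
  τ := fun s' _ => {t' | absT cst cst' M s' t'}
  tau_enabled := fun _ _ _ _ => Set.mem_univ _
  tau_closed := by
    rintro s' hs' a t' ⟨s, hs, t, ht, _, γ, hw⟩
    exact ⟨t, ht, γ, witness_oplus_snd hw⟩

lemma absM_Tr (cst : C → U) (cst' : C → W') (M : ACMAS D sig Ag) {s0' h}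
    (a'0 : JAct sig W') (s' t' : GState D n W') :
    (absM cst cst' M s0' h).Tr s' t' ↔ absT cst cst' M s' t' :=
  ⟨fun ⟨_, h⟩ => h, fun h => ⟨a'0, h⟩⟩

/-- the transfer relation -/
def Good (cst : C → U) (cst' : C → W') (M : ACMAS D sig Ag) (V : Set ℕ)
    (σ : ℕ → U) (σ' : ℕ → W') (s : GState D n U) (s' : GState D n W') : Prop :=
  s ∈ M.S ∧ ∃ γ, EqG cst cst' γ V σ σ' s s'

end AbsDef

section AbsLemmas

variable {D : Schema} {C : Type} {n : ℕ} {sig : Fin (n+1) → AgentSig}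
  {U : Type} [Infinite U] {cst : C → U} {Ag : ∀ i, Agent D (sig i) U}
  {M : ACMAS D sig Ag} {W' : Type} {cst' : C → W'} {b : ℕ} {V : Set ℕ}

lemma ncard_triple [Fintype C] {s' : GState D n W'} {σ' : ℕ → W'}
    (h1 : (adomF s').ncard ≤ b) (hV : V.Finite) :
    (adomF s' ∪ Set.range cst' ∪ σ' '' V).ncard ≤ b + Fintype.card C + V.ncard := by
  have hr : (Set.range cst').ncard ≤ Fintype.card C := by
    rw [← Set.image_univ]
    calc (cst' '' Set.univ).ncard ≤ (Set.univ : Set C).ncard :=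
          Set.ncard_image_le Set.finite_univ
      _ = Fintype.card C := by rw [Set.ncard_univ, Nat.card_eq_fintype_card]
  calc (adomF s' ∪ Set.range cst' ∪ σ' '' V).ncard
      ≤ (adomF s' ∪ Set.range cst').ncard + (σ' '' V).ncard := Set.ncard_union_le _ _
    _ ≤ (adomF s').ncard + (Set.range cst').ncard + (σ' '' V).ncard :=
        Nat.add_le_add_right (Set.ncard_union_le _ _) _
    _ ≤ b + Fintype.card C + V.ncard := by
        have := Set.ncard_image_le (f := σ') hV
        omega

lemma good_adom'_le (hb : BBounded M b) {σ σ' s s'}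
    (hg : Good cst cst' M V σ σ' s s') : (adomF s').ncard ≤ b := by
  obtain ⟨hs, γ, hEq⟩ := hg
  rw [witness_adomF_image hEq.2.1]
  calc (γ '' adomF s).ncard ≤ (adomF s).ncard := Set.ncard_image_le (hb s hs).1
    _ ≤ b := (hb s hs).2

/-- forward step transfer -/
lemma step_forward [Fintype C] [Fintype W'] [Nonempty W'] (hb : BBounded M b)
    (hV : V.Finite)
    (hcard : b + (b + Fintype.card C + V.ncard) ≤ Fintype.card W')
    {σ σ' s s' t} (hg : Good cst cst' M V σ σ' s s') (htr : M.Tr s t) :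
    ∃ t', absT cst cst' M s' t' ∧ Good cst cst' M V σ σ' t t' := by
  obtain ⟨hsS, γ, hEq⟩ := hg
  obtain ⟨a, hta⟩ := htr
  have htS : t ∈ M.S := M.tau_closed s hsS a hta
  set A : Set U := adomF s ∪ Set.range cst ∪ σ '' V with hA
  have hBfin : (adomF t \ A).Finite := (hb t htS).1.subset diff_subset
  have hBb : (adomF t \ A).ncard ≤ b :=
    le_trans (Set.ncard_le_ncard diff_subset (hb t htS).1) (hb t htS).2
  have hs'b : (adomF s').ncard ≤ b := good_adom'_le hb ⟨hsS, γ, hEq⟩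
  obtain ⟨e, he, hed⟩ := exists_injOn_avoid_fin (adomF t \ A) hBfin
    (adomF s' ∪ Set.range cst' ∪ σ' '' V)
    (le_trans (Nat.add_le_add hBb (ncard_triple hs'b hV)) hcard)
  obtain ⟨t', γ₂, _, hmap, hwit, hEq2⟩ := push hEq t e he hed
  exact ⟨t', ⟨s, hsS, t, htS, ⟨a, hta⟩, γ₂, hwit⟩, htS, γ₂, hEq2⟩

/-- backward step transfer (uses uniformity) -/
lemma step_backward [Finite C] [Nonempty W'] (hM : M.Std) (hu : Uniform cst M)
    (hb : BBounded M b) (h0 : adomF M.s0 ⊆ Set.range cst) (hV : V.Finite)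
    {σ σ' s s' t'} (hg : Good cst cst' M V σ σ' s s')
    (htr : absT cst cst' M s' t') :
    ∃ t, M.Tr s t ∧ Good cst cst' M V σ σ' t t' := by
  obtain ⟨hsS, γ, hEq⟩ := hg
  obtain ⟨s₁, hs₁, t₁, ht₁, ⟨a, ha⟩, ι, hι⟩ := htr
  obtain ⟨δ, hEqδ, hδl, hδr⟩ := EqG_symm hEq
  have ht'fin : (adomF t').Finite := by
    rw [witness_adomF_image (witness_oplus_snd hι)]
    exact (hb t₁ ht₁).1.image ι
  -- pull t' back to the concrete domain
  have hAfin : (adomF s ∪ Set.range cst ∪ σ '' V).Finite :=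
    ((hb s hsS).1.union (Set.finite_range cst)).union (hV.image σ)
  obtain ⟨e, he, heT⟩ := exists_injOn_into
    (adomF t' \ (adomF s' ∪ Set.range cst' ∪ σ' '' V)) (ht'fin.subset diff_subset)
    ((adomF s ∪ Set.range cst ∪ σ '' V)ᶜ) (hAfin.infinite_compl)
  obtain ⟨t, δ₂, hagree, hmapt, hwitδ, hEqδ2⟩ := push hEqδ t' e he
    (Set.disjoint_left.2 fun v hv hvmem => (heT hv) hvmem)
  -- combined witness from (s₁ ⊕ t₁) to (s ⊕ t)
  have hζ : IsWitness cst cst (δ₂ ∘ ι) (oplusG s₁ t₁) (oplusG s t) :=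
    witness_comp hι hwitδ
  -- extend to the action parameters
  have hA2fin : (adomF (oplusG s₁ t₁) ∪ Set.range cst).Finite := by
    rw [adomF_oplusG]
    exact (((hb s₁ hs₁).1.union (hb t₁ ht₁).1).union (Set.finite_range cst))
  obtain ⟨e2, he2, he2T⟩ := exists_injOn_into
    (actElems a \ (adomF (oplusG s₁ t₁) ∪ Set.range cst))
    ((actElems_finite a).subset diff_subset)
    (((δ₂ ∘ ι) '' (adomF (oplusG s₁ t₁) ∪ Set.range cst))ᶜ)
    (Set.Finite.infinite_compl (hA2fin.image _))
  obtain ⟨ι', hι'agree, hι'inj⟩ := extend_injOn hζ.1.injOn e2 he2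
    (Set.disjoint_left.2 fun v hv hvmem => (he2T hv) hvmem)
  have htτ : t ∈ M.τ s (JAct.map ι' a) := by
    refine hu.1 s₁ hs₁ t₁ ht₁ s hsS t a ha (δ₂ ∘ ι) hζ ι' hι'agree hι'inj ?_
    intro c
    rw [hι'agree _ (Or.inr ⟨c, rfl⟩)]
    exact hζ.2.1 c
  have htS : t ∈ M.S := M.tau_closed s hsS _ htτ
  obtain ⟨γ₃, hEq3, _, _⟩ := EqG_symm hEqδ2
  exact ⟨t, ⟨_, htτ⟩, htS, γ₃, hEq3⟩

/-- forward epistemic transfer -/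
lemma epi_forward [Fintype C] [Fintype W'] [Nonempty W'] (hb : BBounded M b)
    (hV : V.Finite)
    (hcard : b + (b + Fintype.card C + V.ncard) ≤ Fintype.card W')
    {σ σ' s s' t} {i : Fin n} {s0' h0'}
    (hg : Good cst cst' M V σ σ' s s') (hepi : M.Epi i.succ s t) :
    ∃ t', (absM cst cst' M s0' h0').Epi i.succ s' t' ∧
      Good cst cst' M V σ σ' t t' := by
  obtain ⟨hsS, γ, hEq⟩ := hg
  obtain ⟨_, htS, heq⟩ := hepi
  set A : Set U := adomF s ∪ Set.range cst ∪ σ '' V with hA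
  have hBfin : (adomF t \ A).Finite := (hb t htS).1.subset diff_subset
  have hBb : (adomF t \ A).ncard ≤ b :=
    le_trans (Set.ncard_le_ncard diff_subset (hb t htS).1) (hb t htS).2
  have hs'b : (adomF s').ncard ≤ b := good_adom'_le hb ⟨hsS, γ, hEq⟩
  obtain ⟨e, he, hed⟩ := exists_injOn_avoid_fin (adomF t \ A) hBfin
    (adomF s' ∪ Set.range cst' ∪ σ' '' V)
    (le_trans (Nat.add_le_add hBb (ncard_triple hs'b hV)) hcard)
  obtain ⟨t', γ₂, _, hmap, hwit, hEq2⟩ := push hEq t e he hed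
  refine ⟨t', ⟨⟨s, hsS, γ₂, witness_oplus_fst hwit⟩,
    ⟨t, htS, γ₂, witness_oplus_snd hwit⟩, ?_⟩, htS, γ₂, hEq2⟩
  rw [witness_map (witness_oplus_fst hwit) i.succ, hmap i.succ, heq]

/-- backward epistemic transfer -/
lemma epi_backward [Finite C] [Nonempty W'] (hM : M.Std) (hu : Uniform cst M)
    (hb : BBounded M b) (h0 : adomF M.s0 ⊆ Set.range cst) (hV : V.Finite)
    {σ σ' s s' t'} {i : Fin n} {s0' h0'}
    (hg : Good cst cst' M V σ σ' s s')
    (hepi : (absM cst cst' M s0' h0').Epi i.succ s' t') :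
    ∃ t, M.Epi i.succ s t ∧ Good cst cst' M V σ σ' t t' := by
  obtain ⟨hsS, γ, hEq⟩ := hg
  obtain ⟨hs'S, ht'S, heq'⟩ := hepi
  obtain ⟨t₁, ht₁S, κ₁, hκ₁⟩ := ht'S
  obtain ⟨δ, hEqδ, hδl, hδr⟩ := EqG_symm hEq
  have ht'fin : (adomF t').Finite := by
    rw [witness_adomF_image hκ₁]
    exact (hb t₁ ht₁S).1.image κ₁
  have hAfin : (adomF s ∪ Set.range cst ∪ σ '' V).Finite :=
    ((hb s hsS).1.union (Set.finite_range cst)).union (hV.image σ)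
  obtain ⟨e, he, heT⟩ := exists_injOn_into
    (adomF t' \ (adomF s' ∪ Set.range cst' ∪ σ' '' V)) (ht'fin.subset diff_subset)
    ((adomF s ∪ Set.range cst ∪ σ '' V)ᶜ) (hAfin.infinite_compl)
  obtain ⟨t, δ₂, hagree, hmapt, hwitδ, hEqδ2⟩ := push hEqδ t' e he
    (Set.disjoint_left.2 fun v hv hvmem => (heT hv) hvmem)
  have htS : t ∈ M.S := by
    refine S_iso_closed hM hu hb h0 t₁ ht₁S t ⟨δ₂ ∘ κ₁, ?_⟩
    exact witness_comp hκ₁ (witness_oplus_snd hwitδ)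
  refine ⟨t, ⟨hsS, htS, ?_⟩, ?_⟩
  · rw [witness_map (witness_oplus_fst hwitδ) i.succ, hmapt i.succ, heq']
  · obtain ⟨γ₃, hEq3, _, _⟩ := EqG_symm hEqδ2
    exact ⟨htS, γ₃, hEq3⟩

end AbsLemmas
end S15
set_option linter.unusedSectionVars false
namespace S15
open Set

section Runs

variable {D : Schema} {n : ℕ} {sig : Fin (n+1) → AgentSig} {W : Type}
  {Ag' : ∀ i, Agent D (sig i) W}

lemma tr_mem_S (N : ACMAS D sig Ag') {s t} (hs : s ∈ N.S) (h : N.Tr s t) : t ∈ N.S := by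
  obtain ⟨a, ht⟩ := h
  exact N.tau_closed s hs a ht

lemma exists_run (N : ACMAS D sig Ag') (hser : ∀ x ∈ N.S, ∃ y, N.Tr x y) :
    ∀ s ∈ N.S, ∃ r, N.IsRun r ∧ r 0 = s := by
  intro s hs
  obtain ⟨f, hf0, hfQ, hfR⟩ := chain (fun _ x => x ∈ N.S) (fun _ x y => N.Tr x y) s hs
    (fun k a ha => by
      obtain ⟨y, hy⟩ := hser a ha
      exact ⟨y, tr_mem_S N ha hy, hy⟩)
  exact ⟨f, ⟨hfQ, hfR⟩, hf0⟩

lemma exists_run_through (N : ACMAS D sig Ag') (hser : ∀ x ∈ N.S, ∃ y, N.Tr x y)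
    {s t} (hs : s ∈ N.S) (htr : N.Tr s t) :
    ∃ r, N.IsRun r ∧ r 0 = s ∧ r 1 = t := by
  have htS : t ∈ N.S := tr_mem_S N hs htr
  obtain ⟨r0, hr0, hr00⟩ := exists_run N hser t htS
  refine ⟨fun k => match k with | 0 => s | (k+1) => r0 k, ⟨?_, ?_⟩, rfl, hr00⟩
  · intro k
    match k with
    | 0 => exact hs
    | (k+1) => exact hr0.1 k
  · intro k
    match k with
    | 0 => show N.Tr s (r0 0); rwa [hr00]
    | (k+1) => exact hr0.2 k

end Runs

section AbsRuns

variable {D : Schema} {C : Type} {n : ℕ} {sig : Fin (n+1) → AgentSig}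
  {U : Type} [Infinite U] {cst : C → U} {Ag : ∀ i, Agent D (sig i) U}
  {M : ACMAS D sig Ag} {W' : Type} {cst' : C → W'} {b : ℕ} {V : Set ℕ}

lemma good_mem_absS {σ σ' s s'} (hg : Good cst cst' M V σ σ' s s') :
    s' ∈ absS cst cst' M := by
  obtain ⟨hs, γ, hEq⟩ := hg
  exact ⟨s, hs, γ, hEq.2.1⟩

lemma absSerial [Fintype C] [Fintype W'] [Nonempty W'] (hb : BBounded M b)
    (hM : M.Std) (hcard : b + (b + Fintype.card C + 0) ≤ Fintype.card W') :
    ∀ s' ∈ absS cst cst' M, ∃ t', absT cst cst' M s' t' := by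
  rintro s' ⟨s, hs, γ, hγ⟩
  obtain ⟨t, htr⟩ := hM.1 s hs
  have hg : Good cst cst' M ∅ (fun _ => Classical.arbitrary U)
      (fun _ => Classical.arbitrary W') s s' := ⟨hs, γ, EqG_of_witness hγ _ _⟩
  obtain ⟨t', ht', _⟩ := step_forward hb finite_empty (by simpa using hcard) hg htr
  exact ⟨t', ht'⟩

lemma absM_serial [Fintype C] [Fintype W'] [Nonempty W'] (hb : BBounded M b)
    (hM : M.Std) (hcard : b + (b + Fintype.card C + 0) ≤ Fintype.card W')
    {s0' h0'} (a'0 : JAct sig W') :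
    ∀ x ∈ (absM cst cst' M s0' h0').S, ∃ y, (absM cst cst' M s0' h0').Tr x y := by
  intro x hx
  obtain ⟨y, hy⟩ := absSerial hb hM hcard x hx
  exact ⟨y, a'0, hy⟩

/-- transfer of runs, concrete to abstract -/
lemma run_forward [Fintype C] [Fintype W'] [Nonempty W'] (hb : BBounded M b)
    (hV : V.Finite)
    (hcard : b + (b + Fintype.card C + V.ncard) ≤ Fintype.card W')
    {s0' h0'} (a'0 : JAct sig W') {σ σ' s s' r}
    (hg : Good cst cst' M V σ σ' s s') (hr : M.IsRun r) (hr0 : r 0 = s) :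
    ∃ r', (absM cst cst' M s0' h0').IsRun r' ∧ r' 0 = s' ∧
      ∀ k, Good cst cst' M V σ σ' (r k) (r' k) := by
  obtain ⟨f, hf0, hfQ, hfR⟩ := chain
    (fun k x => Good cst cst' M V σ σ' (r k) x)
    (fun _ x y => (absM cst cst' M s0' h0').Tr x y) s' (show Good cst cst' M V σ σ' (r 0) s' from hr0 ▸ hg)
    (fun k x hx => by
      obtain ⟨t', ht', hgood⟩ := step_forward hb hV hcard hx (hr.2 k)
      exact ⟨t', hgood, a'0, ht'⟩)
  exact ⟨f, ⟨fun k => good_mem_absS (hfQ k), hfR⟩, hf0, hfQ⟩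

/-- transfer of runs, abstract to concrete -/
lemma run_backward [Finite C] [Nonempty W'] (hM : M.Std) (hu : Uniform cst M)
    (hb : BBounded M b) (h0 : adomF M.s0 ⊆ Set.range cst) (hV : V.Finite)
    {s0' h0'} {σ σ' s s' r'}
    (hg : Good cst cst' M V σ σ' s s')
    (hr' : (absM cst cst' M s0' h0').IsRun r') (hr0 : r' 0 = s') :
    ∃ r, M.IsRun r ∧ r 0 = s ∧
      ∀ k, Good cst cst' M V σ σ' (r k) (r' k) := by
  obtain ⟨f, hf0, hfQ, hfR⟩ := chain
    (fun k x => Good cst cst' M V σ σ' x (r' k))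
    (fun _ x y => M.Tr x y) s (show Good cst cst' M V σ σ' s (r' 0) from hr0 ▸ hg)
    (fun k x hx => by
      obtain ⟨a, ht'⟩ := hr'.2 k
      obtain ⟨t, htr, hgood⟩ := step_backward hM hu hb h0 hV hx ht'
      exact ⟨t, hgood, htr⟩)
  exact ⟨f, ⟨fun k => (hfQ k).1, hfR⟩, hf0, hfQ⟩

/-- transfer of epistemic chains, concrete to abstract -/
lemma transGen_forward [Fintype C] [Fintype W'] [Nonempty W'] (hb : BBounded M b)
    (hV : V.Finite)
    (hcard : b + (b + Fintype.card C + V.ncard) ≤ Fintype.card W')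
    {s0' h0'} {σ σ' s s' t}
    (hg : Good cst cst' M V σ σ' s s')
    (htg : Relation.TransGen M.EpiAny s t) :
    ∃ t', Relation.TransGen (absM cst cst' M s0' h0').EpiAny s' t' ∧
      Good cst cst' M V σ σ' t t' := by
  induction htg with
  | single h =>
    obtain ⟨i, hepi⟩ := h
    obtain ⟨t', hepi', hgood⟩ :=
      epi_forward (s0' := s0') (h0' := h0') hb hV hcard hg hepi
    exact ⟨t', Relation.TransGen.single ⟨i, hepi'⟩, hgood⟩
  | tail htg h ih =>
    obtain ⟨m', hm', hgood⟩ := ih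
    obtain ⟨i, hepi⟩ := h
    obtain ⟨t', hepi', hgood'⟩ :=
      epi_forward (s0' := s0') (h0' := h0') hb hV hcard hgood hepi
    exact ⟨t', Relation.TransGen.tail hm' ⟨i, hepi'⟩, hgood'⟩

/-- transfer of epistemic chains, abstract to concrete -/
lemma transGen_backward [Finite C] [Nonempty W'] (hM : M.Std) (hu : Uniform cst M)
    (hb : BBounded M b) (h0 : adomF M.s0 ⊆ Set.range cst) (hV : V.Finite)
    {s0' h0'} {σ σ' s s' t'}
    (hg : Good cst cst' M V σ σ' s s')
    (htg : Relation.TransGen (absM cst cst' M s0' h0').EpiAny s' t') :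
    ∃ t, Relation.TransGen M.EpiAny s t ∧ Good cst cst' M V σ σ' t t' := by
  induction htg with
  | single h =>
    obtain ⟨i, hepi⟩ := h
    obtain ⟨t, hepi2, hgood⟩ := epi_backward hM hu hb h0 hV hg hepi
    exact ⟨t, Relation.TransGen.single ⟨i, hepi2⟩, hgood⟩
  | tail htg h ih =>
    obtain ⟨m, hm, hgood⟩ := ih
    obtain ⟨i, hepi⟩ := h
    obtain ⟨t, hepi2, hgood'⟩ := epi_backward hM hu hb h0 hV hgood hepi
    exact ⟨t, Relation.TransGen.tail hm ⟨i, hepi2⟩, hgood'⟩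

end AbsRuns
end S15
set_option linter.unusedSectionVars false
namespace S15
open Set Function

section Update
variable {D : Schema} {C : Type} {n : ℕ} {W W' : Type}
  {cstW : C → W} {cstW' : C → W'}

lemma EqG_update {γ : W → W'} {V : Set ℕ} {σ : ℕ → W} {σ' : ℕ → W'}
    {s : GState D n W} {s' : GState D n W'}
    (hEq : EqG cstW cstW' γ V σ σ' s s') {x : ℕ} (hx : x ∈ V) {u : W}
    (hu : u ∈ adomF s) :
    EqG cstW cstW' γ V (Function.update σ x u) (Function.update σ' x (γ u)) s s' := by
  obtain ⟨h2, hw, hσ⟩ := hEq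
  have h1 := hw.1
  refine ⟨⟨?_, ?_, ?_⟩, hw, ?_⟩
  · rintro w (hw' | ⟨y, hy, rfl⟩)
    · rcases h1.mapsTo hw' with hw'' | hw''
      · exact Or.inl (Or.inl hw'')
      · exact Or.inl (Or.inr hw'')
    · by_cases hyx : y = x
      · subst hyx
        refine Or.inr ⟨y, hy, ?_⟩
        simp [Function.update_self]
      · refine Or.inr ⟨y, hy, ?_⟩
        rw [Function.update_of_ne hyx, Function.update_of_ne hyx]
        exact hσ y hy
  · refine h2.injOn.mono ?_
    rintro w (hw' | ⟨y, hy, rfl⟩)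
    · exact Or.inl hw'
    · by_cases hyx : y = x
      · subst hyx
        rw [Function.update_self]
        exact Or.inl (Or.inl hu)
      · rw [Function.update_of_ne hyx]
        exact Or.inr ⟨y, hy, rfl⟩
  · rintro v (hv' | ⟨y, hy, rfl⟩)
    · obtain ⟨w, hw', hwe⟩ := h1.surjOn hv'
      exact ⟨w, Or.inl hw', hwe⟩
    · by_cases hyx : y = x
      · subst hyx
        refine ⟨u, Or.inr ⟨y, hy, Function.update_self ..⟩, ?_⟩
        exact (Function.update_self y (γ u) σ').symm
      · rw [Function.update_of_ne hyx]
        refine ⟨σ y, Or.inr ⟨y, hy, Function.update_of_ne hyx ..⟩, ?_⟩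
        exact (hσ y hy).symm
  · intro y hy
    by_cases hyx : y = x
    · subst hyx; simp [Function.update_self]
    · rw [Function.update_of_ne hyx, Function.update_of_ne hyx]
      exact hσ y hy
end Update

section Main

variable {D : Schema} {C : Type} [Fintype C] {n : ℕ} {sig : Fin (n+1) → AgentSig}
  {U : Type} [Infinite U] {cst : C → U} {Ag : ∀ i, Agent D (sig i) U}
  {M : ACMAS D sig Ag} {W' : Type} [Fintype W'] [Nonempty W'] {cst' : C → W'}
  {b : ℕ} {V : Set ℕ}

/-- The main transfer theorem: FO-CTLK satisfaction is invariant between the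
concrete system and its abstraction along the `Good` relation. -/
lemma sat_transfer (hM : M.Std) (hu : Uniform cst M) (hb : BBounded M b)
    (h0 : adomF M.s0 ⊆ Set.range cst) (hV : V.Finite)
    (hcard : b + (b + Fintype.card C + V.ncard) ≤ Fintype.card W')
    {s0' : GState D n W'} {h0' : s0' ∈ absS cst cst' M} (a'0 : JAct sig W')
    (ψ : FOCTLK D C n) :
    ↑ψ.vars ⊆ V → ∀ s s' σ σ', Good cst cst' M V σ σ' s s' →
      (FOCTLK.sat cst M ψ s σ ↔
        FOCTLK.sat cst' (absM cst cst' M s0' h0') ψ s' σ') := by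
  have hser' : ∀ x ∈ (absM cst cst' M s0' h0').S, ∃ y, (absM cst cst' M s0' h0').Tr x y :=
    absM_serial hb hM (by omega) a'0
  induction ψ with
  | atom ψ0 =>
    intro hψ s s' σ σ' hg
    obtain ⟨hsS, γ, hEq⟩ := hg
    simp only [FOCTLK.sat]
    exact fo_transfer ψ0 V hψ γ σ σ' _ _ (EqI_of_EqG hEq)
  | not ψ0 ih =>
    intro hψ s s' σ σ' hg
    simp only [FOCTLK.sat]
    rw [ih hψ s s' σ σ' hg]
  | imp ψ1 ψ2 ih1 ih2 =>
    intro hψ s s' σ σ' hg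
    have hψ1 : ↑ψ1.vars ⊆ V := fun y hy => hψ (by
      simp only [FOCTLK.vars, Finset.coe_union, Set.mem_union]; exact Or.inl hy)
    have hψ2 : ↑ψ2.vars ⊆ V := fun y hy => hψ (by
      simp only [FOCTLK.vars, Finset.coe_union, Set.mem_union]; exact Or.inr hy)
    simp only [FOCTLK.sat]
    rw [ih1 hψ1 s s' σ σ' hg, ih2 hψ2 s s' σ σ' hg]
  | all x ψ0 ih =>
    intro hψ s s' σ σ' hg
    have hx : x ∈ V := hψ (by simp [FOCTLK.vars])
    have hψ0 : ↑ψ0.vars ⊆ V := fun y hy => hψ (by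
      simp only [FOCTLK.vars, Finset.coe_insert, Set.mem_insert_iff]; exact Or.inr hy)
    obtain ⟨hsS, γ, hEq⟩ := hg
    have hadom : Set.BijOn γ (adomF s) (adomF s') := witness_bijOn_adomF hEq.2.1
    simp only [FOCTLK.sat]
    constructor
    · intro hs u' hu'
      obtain ⟨u, hu, rfl⟩ := hadom.surjOn hu'
      exact (ih hψ0 s s' _ _ ⟨hsS, γ, EqG_update hEq hx hu⟩).1 (hs u hu)
    · intro hs u hu
      exact (ih hψ0 s s' _ _ ⟨hsS, γ, EqG_update hEq hx hu⟩).2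
        (hs (γ u) (hadom.mapsTo hu))
  | ax ψ0 ih =>
    intro hψ s s' σ σ' hg
    simp only [FOCTLK.sat]
    constructor
    · intro hsat r' hr' hr'0
      have htr' := hr'.2 0
      rw [hr'0] at htr'
      obtain ⟨a, habs⟩ := htr'
      obtain ⟨t, htr, hgood⟩ := step_backward hM hu hb h0 hV hg habs
      obtain ⟨r, hrun, hr0, hr1⟩ := exists_run_through M hM.1 hg.1 htr
      have := hsat r hrun hr0
      rw [hr1] at this
      exact (ih hψ t (r' 1) σ σ' hgood).1 this
    · intro hsat r hr hr0
      have htr := hr.2 0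
      rw [hr0] at htr
      obtain ⟨t', habs, hgood⟩ := step_forward hb hV hcard hg htr
      obtain ⟨r', hrun', hr'0, hr'1⟩ := exists_run_through _ hser'
        (good_mem_absS hg) ⟨a'0, habs⟩
      have := hsat r' hrun' hr'0
      rw [hr'1] at this
      exact (ih hψ (r 1) t' σ σ' hgood).2 this
  | au ψ1 ψ2 ih1 ih2 =>
    intro hψ s s' σ σ' hg
    have hψ1 : ↑ψ1.vars ⊆ V := fun y hy => hψ (by
      simp only [FOCTLK.vars, Finset.coe_union, Set.mem_union]; exact Or.inl hy)
    have hψ2 : ↑ψ2.vars ⊆ V := fun y hy => hψ (by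
      simp only [FOCTLK.vars, Finset.coe_union, Set.mem_union]; exact Or.inr hy)
    simp only [FOCTLK.sat]
    constructor
    · intro hsat r' hr' hr'0
      obtain ⟨r, hrun, hr0, hgood⟩ := run_backward hM hu hb h0 hV hg hr' hr'0
      obtain ⟨k, hk, hj⟩ := hsat r hrun hr0
      exact ⟨k, (ih2 hψ2 _ _ σ σ' (hgood k)).1 hk,
        fun j hjk => (ih1 hψ1 _ _ σ σ' (hgood j)).1 (hj j hjk)⟩
    · intro hsat r hr hr0
      obtain ⟨r', hrun', hr'0, hgood⟩ := run_forward hb hV hcard a'0 hg hr hr0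
      obtain ⟨k, hk, hj⟩ := hsat r' hrun' hr'0
      exact ⟨k, (ih2 hψ2 _ _ σ σ' (hgood k)).2 hk,
        fun j hjk => (ih1 hψ1 _ _ σ σ' (hgood j)).2 (hj j hjk)⟩
  | eu ψ1 ψ2 ih1 ih2 =>
    intro hψ s s' σ σ' hg
    have hψ1 : ↑ψ1.vars ⊆ V := fun y hy => hψ (by
      simp only [FOCTLK.vars, Finset.coe_union, Set.mem_union]; exact Or.inl hy)
    have hψ2 : ↑ψ2.vars ⊆ V := fun y hy => hψ (by
      simp only [FOCTLK.vars, Finset.coe_union, Set.mem_union]; exact Or.inr hy)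
    simp only [FOCTLK.sat]
    constructor
    · rintro ⟨r, hrun, hr0, k, hk, hj⟩
      obtain ⟨r', hrun', hr'0, hgood⟩ := run_forward hb hV hcard a'0 hg hrun hr0
      exact ⟨r', hrun', hr'0, k, (ih2 hψ2 _ _ σ σ' (hgood k)).1 hk,
        fun j hjk => (ih1 hψ1 _ _ σ σ' (hgood j)).1 (hj j hjk)⟩
    · rintro ⟨r', hrun', hr'0, k, hk, hj⟩
      obtain ⟨r, hrun, hr0, hgood⟩ := run_backward hM hu hb h0 hV hg hrun' hr'0
      exact ⟨r, hrun, hr0, k, (ih2 hψ2 _ _ σ σ' (hgood k)).2 hk,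
        fun j hjk => (ih1 hψ1 _ _ σ σ' (hgood j)).2 (hj j hjk)⟩
  | know i ψ0 ih =>
    intro hψ s s' σ σ' hg
    simp only [FOCTLK.sat]
    constructor
    · intro hsat t' hepi'
      obtain ⟨t, hepi, hgood⟩ := epi_backward hM hu hb h0 hV hg hepi'
      exact (ih hψ t t' σ σ' hgood).1 (hsat t hepi)
    · intro hsat t hepi
      obtain ⟨t', hepi', hgood⟩ :=
        epi_forward (s0' := s0') (h0' := h0') hb hV hcard hg hepi
      exact (ih hψ t t' σ σ' hgood).2 (hsat t' hepi')
  | ck ψ0 ih =>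
    intro hψ s s' σ σ' hg
    simp only [FOCTLK.sat]
    constructor
    · intro hsat t' htg'
      obtain ⟨t, htg, hgood⟩ := transGen_backward hM hu hb h0 hV hg htg'
      exact (ih hψ t t' σ σ' hgood).1 (hsat t htg)
    · intro hsat t htg
      obtain ⟨t', htg', hgood⟩ :=
        transGen_forward (s0' := s0') (h0' := h0') hb hV hcard hg htg
      exact (ih hψ t t' σ σ' hgood).2 (hsat t' htg')

end Main
end S15
set_option linter.unusedSectionVars false
namespace S15
open Set Function

section Base
variable {D : Schema} {C : Type} {n : ℕ} {W W' : Type}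

open Classical in
noncomputable def g0 [Nonempty W'] (cst : C → W) (cst' : C → W') : W → W' :=
  fun u => if h : ∃ c, cst c = u then cst' h.choose else Classical.arbitrary W'

lemma g0_cst [Nonempty W'] {cst : C → W} {cst' : C → W'}
    (hcst : Function.Injective cst) (c : C) : g0 cst cst' (cst c) = cst' c := by
  have h : ∃ c', cst c' = cst c := ⟨c, rfl⟩
  rw [g0, dif_pos h]
  exact congrArg cst' (hcst h.choose_spec)

lemma witness_g0 [Nonempty W'] {cst : C → W} {cst' : C → W'}
    (hcst : Function.Injective cst) (hcst' : Function.Injective cst')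
    {s : GState D n W} (h0 : adomF s ⊆ Set.range cst) :
    IsWitness cst cst' (g0 cst cst') s (fun i => (s i).map (g0 cst cst')) := by
  set s' : GState D n W' := fun i => (s i).map (g0 cst cst') with hs'
  have hA : adomF s ∪ Set.range cst = Set.range cst := union_eq_self_of_subset_left h0
  have himg : adomF s' = (g0 cst cst') '' adomF s := by
    have h1 : (fun j => (s' j).adom) = fun j => (g0 cst cst') '' (s j).adom :=
      funext fun j => adom_map (g0 cst cst') (s j)
    show (⋃ j, (s' j).adom) = _
    rw [h1, ← image_iUnion]; rfl
  have hinj : Set.InjOn (g0 cst cst') (Set.range cst) := by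
    rintro _ ⟨c, rfl⟩ _ ⟨c', rfl⟩ h
    rw [g0_cst hcst, g0_cst hcst] at h
    rw [hcst' h]
  have hrng : (g0 cst cst') '' Set.range cst = Set.range cst' := by
    apply Subset.antisymm
    · rintro _ ⟨_, ⟨c, rfl⟩, rfl⟩
      rw [g0_cst hcst]
      exact ⟨c, rfl⟩
    · rintro _ ⟨c, rfl⟩
      exact ⟨cst c, ⟨c, rfl⟩, g0_cst hcst c⟩
  have hA' : adomF s' ∪ Set.range cst' = Set.range cst' := by
    apply union_eq_self_of_subset_left
    rw [himg]
    intro v hv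
    obtain ⟨u, hu, rfl⟩ := hv
    rw [← hrng]
    exact ⟨u, h0 hu, rfl⟩
  refine ⟨?_, fun c => g0_cst hcst c, ?_⟩
  · rw [hA, hA', ← hrng]
    exact ⟨Set.mapsTo_image _ _, hinj, Set.surjOn_image _ _⟩
  · intro i r tp htp
    rw [hA] at htp
    constructor
    · intro h1; exact ⟨tp, h1, rfl⟩
    · rintro ⟨tp₂, htp₂, heq⟩
      have : tp₂ = tp := funext fun j => hinj
        (h0 (adom_comp_subset s i (mem_adom_of_mem_rel htp₂ j))) (htp j)
        (congrFun heq j)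
      exact this ▸ htp₂

/-- extend a witness to a full equivalent-assignment pair, given fresh targets -/
lemma assign_extend {cstW : C → W} {cstW' : C → W'} {γ : W → W'}
    {s : GState D n W} {s' : GState D n W'}
    (hw : IsWitness cstW cstW' γ s s') (V : Set ℕ) (σ : ℕ → W) (e : W → W')
    (he : Set.InjOn e (σ '' V \ (adomF s ∪ Set.range cstW)))
    (hed : Disjoint (e '' (σ '' V \ (adomF s ∪ Set.range cstW)))
      (adomF s' ∪ Set.range cstW')) :
    ∃ γ₂ σ', EqG cstW cstW' γ₂ V σ σ' s s' := by
  classical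
  set A := adomF s ∪ Set.range cstW with hA
  set γ₂ := fun u => if u ∈ A then γ u else e u with hγ₂
  have hagree : ∀ u ∈ A, γ₂ u = γ u := fun u hu => if_pos hu
  have hAimg : γ₂ '' A = adomF s' ∪ Set.range cstW' := by
    rw [Set.image_congr hagree]; exact hw.1.image_eq
  have hwit : IsWitness cstW cstW' γ₂ s s' := by
    refine ⟨hw.1.congr fun u hu => (hagree u hu).symm, ?_, ?_⟩
    · intro c
      rw [hagree _ (Or.inr ⟨c, rfl⟩)]; exact hw.2.1 c
    · intro i r tp htp
      have : (fun j => γ₂ (tp j)) = fun j => γ (tp j) :=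
        funext fun j => hagree _ (htp j)
      rw [this]
      exact hw.2.2 i r tp htp
  have hcases : ∀ u ∈ A ∪ σ '' V, u ∈ A ∨ u ∈ σ '' V \ A := by
    intro u hu
    by_cases h : u ∈ A
    · exact Or.inl h
    · rcases hu with hu | hu
      · exact absurd hu h
      · exact Or.inr ⟨hu, h⟩
  have hinj : Set.InjOn γ₂ (A ∪ σ '' V) := by
    intro u hu v hv huv
    have huv' : (if u ∈ A then γ u else e u) = (if v ∈ A then γ v else e v) := huv
    clear huv
    rcases hcases u hu with hu' | hu' <;> rcases hcases v hv with hv' | hv'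
    · exact hw.1.injOn hu' hv' (by rwa [if_pos hu', if_pos hv'] at huv')
    · exfalso
      rw [if_pos hu', if_neg hv'.2] at huv'
      exact (Set.disjoint_left.1 hed) ⟨v, hv', huv'.symm⟩ (hAimg ▸ ⟨u, hu', hagree u hu'⟩)
    · exfalso
      rw [if_neg hu'.2, if_pos hv'] at huv'
      refine (Set.disjoint_left.1 hed) ⟨u, hu', rfl⟩ ?_
      rw [huv']
      exact hAimg ▸ ⟨v, hv', hagree v hv'⟩
    · rw [if_neg hu'.2, if_neg hv'.2] at huv'; exact he hu' hv' huv'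
  refine ⟨γ₂, fun x => γ₂ (σ x), ⟨?_, ?_, ?_⟩, hwit, fun x hx => rfl⟩
  · rintro u (hu | ⟨x, hx, rfl⟩)
    · exact Or.inl (hAimg ▸ ⟨u, hu, rfl⟩)
    · exact Or.inr ⟨x, hx, rfl⟩
  · exact hinj
  · rintro v (hv | ⟨x, hx, rfl⟩)
    · obtain ⟨u, hu, rfl⟩ := hAimg.symm ▸ hv
      exact ⟨u, Or.inl hu, rfl⟩
    · exact ⟨σ x, Or.inr ⟨x, hx, rfl⟩, rfl⟩

end Base
end S15
set_option linter.unusedSectionVars false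
namespace S15
open Set Function

section Final

variable {D : Schema} {C : Type} [Fintype C] {n : ℕ} {sig : Fin (n+1) → AgentSig}
  {U : Type} [Infinite U] {cst : C → U} {Ag : ∀ i, Agent D (sig i) U}
  {M : ACMAS D sig Ag} {W' : Type} [Fintype W'] [Nonempty W'] {cst' : C → W'}
  {b : ℕ} {V : Set ℕ}

lemma base_forward (hcst : Function.Injective cst) (hcst' : Function.Injective cst')
    (hb : BBounded M b) (h0 : adomF M.s0 ⊆ Set.range cst) (hV : V.Finite)
    (σ' : ℕ → W') :
    ∃ σ, Good cst cst' M V σ σ' M.s0 (fun i => (M.s0 i).map (g0 cst cst')) := by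
  have hw0 := witness_g0 (D := D) (n := n) hcst hcst' h0
  obtain ⟨δ0, hδ0, _, _⟩ := witness_symm hw0
  have hfin : (adomF M.s0 ∪ Set.range cst).Finite :=
    (hb M.s0 M.s0_mem).1.union (Set.finite_range cst)
  obtain ⟨e, he, heT⟩ := exists_injOn_into
    (σ' '' V \ (adomF (fun i => (M.s0 i).map (g0 cst cst')) ∪ Set.range cst'))
    ((hV.image σ').subset diff_subset)
    ((adomF M.s0 ∪ Set.range cst)ᶜ) hfin.infinite_compl
  obtain ⟨δ₂, σ, hEq⟩ := assign_extend hδ0 V σ' e he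
    (Set.disjoint_left.2 fun v hv hm => heT hv hm)
  obtain ⟨γ₃, hEq3, _, _⟩ := EqG_symm hEq
  exact ⟨σ, M.s0_mem, γ₃, hEq3⟩

lemma base_backward (hcst : Function.Injective cst) (hcst' : Function.Injective cst')
    (hb : BBounded M b) (h0 : adomF M.s0 ⊆ Set.range cst) (hV : V.Finite)
    (hcard : b + (b + Fintype.card C + V.ncard) ≤ Fintype.card W')
    (σ : ℕ → U) :
    ∃ σ', Good cst cst' M V σ σ' M.s0 (fun i => (M.s0 i).map (g0 cst cst')) := by
  have hw0 := witness_g0 (D := D) (n := n) hcst hcst' h0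
  have hBfin : (σ '' V \ (adomF M.s0 ∪ Set.range cst)).Finite :=
    (hV.image σ).subset diff_subset
  have hBb : (σ '' V \ (adomF M.s0 ∪ Set.range cst)).ncard ≤ V.ncard :=
    le_trans (Set.ncard_le_ncard diff_subset (hV.image σ)) (Set.ncard_image_le hV)
  have hs0' : (adomF (fun i => (M.s0 i).map (g0 cst cst'))).ncard ≤ b := by
    rw [witness_adomF_image hw0]
    exact le_trans (Set.ncard_image_le (hb M.s0 M.s0_mem).1) (hb M.s0 M.s0_mem).2
  have hA'card : (adomF (fun i => (M.s0 i).map (g0 cst cst')) ∪ Set.range cst').ncard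
      ≤ b + Fintype.card C := by
    have hr : (Set.range cst').ncard ≤ Fintype.card C := by
      rw [← Set.image_univ]
      calc (cst' '' Set.univ).ncard ≤ (Set.univ : Set C).ncard :=
            Set.ncard_image_le Set.finite_univ
        _ = Fintype.card C := by rw [Set.ncard_univ, Nat.card_eq_fintype_card]
    calc _ ≤ _ + _ := Set.ncard_union_le _ _
      _ ≤ b + Fintype.card C := Nat.add_le_add hs0' hr
  obtain ⟨e, he, hed⟩ := exists_injOn_avoid_fin _ hBfin
    (adomF (fun i => (M.s0 i).map (g0 cst cst')) ∪ Set.range cst')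
    (by omega)
  obtain ⟨γ₂, σ', hEq⟩ := assign_extend hw0 V σ e he hed
  exact ⟨σ', M.s0_mem, γ₂, hEq⟩

/-- the finite-domain equivalence, for any large enough finite domain -/
lemma final (hcst : Function.Injective cst) (hcst' : Function.Injective cst')
    (hM : M.Std) (hu : Uniform cst M) (hb : BBounded M b)
    (h0 : adomF M.s0 ⊆ Set.range cst) (φ : FOCTLK D C n)
    (hcard : b + (b + Fintype.card C + (↑(FOCTLK.vars φ) : Set ℕ).ncard)
      ≤ Fintype.card W') :
    ∃ (Ag' : ∀ i, Agent D (sig i) W') (M' : ACMAS D sig Ag'),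
      (FOCTLK.satM cst M φ ↔ FOCTLK.satM cst' M' φ) := by
  classical
  have hVfin : (↑(FOCTLK.vars φ) : Set ℕ).Finite := Finset.finite_toSet _
  have hw0 := witness_g0 (D := D) (n := n) hcst hcst' h0
  have h0' : (fun i => (M.s0 i).map (g0 cst cst')) ∈ absS cst cst' M :=
    ⟨M.s0, M.s0_mem, _, hw0⟩
  obtain ⟨t0, a0, _⟩ := hM.1 M.s0 M.s0_mem
  set a'0 : JAct sig W' := JAct.map (fun _ => Classical.arbitrary W') a0 with ha'0
  refine ⟨trivAg D sig W', absM cst cst' M (fun i => (M.s0 i).map (g0 cst cst')) h0', ?_⟩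
  constructor
  · intro h σ'
    obtain ⟨σ, hgood⟩ := base_forward hcst hcst' hb h0 hVfin σ'
    exact (sat_transfer hM hu hb h0 hVfin hcard a'0 φ subset_rfl
      M.s0 _ σ σ' hgood).1 (h σ)
  · intro h σ
    obtain ⟨σ', hgood⟩ := base_backward hcst hcst' hb h0 hVfin hcard σ
    exact (sat_transfer hM hu hb h0 hVfin hcard a'0 φ subset_rfl
      M.s0 _ σ σ' hgood).2 (h σ')

end Final
end S15
/-! ### STATEMENT 15 -/

theorem statement15
    {D : Schema} {C : Type} [Fintype C] {n : ℕ}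
    {sig : Fin (n+1) → AgentSig} {U : Type} [Infinite U]
    (cst : C → U) (hcst : Function.Injective cst)
    {Ag : ∀ i, Agent D (sig i) U} (M : ACMAS D sig Ag)
    (hM : M.Std)
    (hu : Uniform cst M)
    (b : ℕ) (hb : BBounded M b)
    (h0 : adomF M.s0 ⊆ Set.range cst)
    (φ : FOCTLK D C n) :
    ∃ (U' : Type) (cst' : C → U'), Finite U' ∧ Function.Injective cst' ∧
      ∃ (Ag' : ∀ i, Agent D (sig i) U') (M' : ACMAS D sig Ag'),
        (FOCTLK.satM cst M φ ↔ FOCTLK.satM cst' M' φ) := by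
  classical
  refine ⟨C ⊕ Fin (2*b + (FOCTLK.vars φ).card + 1), Sum.inl, Finite.of_fintype _,
    Sum.inl_injective, ?_⟩
  haveI : Nonempty (C ⊕ Fin (2*b + (FOCTLK.vars φ).card + 1)) :=
    ⟨Sum.inr ⟨0, Nat.succ_pos _⟩⟩
  refine S15.final hcst Sum.inl_injective hM hu hb h0 φ ?_
  have h1 : (↑(FOCTLK.vars φ) : Set ℕ).ncard = (FOCTLK.vars φ).card :=
    Set.ncard_coe_finset _
  have h2 : Fintype.card (C ⊕ Fin (2*b + (FOCTLK.vars φ).card + 1)) =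
      Fintype.card C + (2*b + (FOCTLK.vars φ).card + 1) := by
    rw [Fintype.card_sum, Fintype.card_fin]
  omega
end

section
/- Let P be an AC-MAS and let P_b be its b-restriction, for b ∈ ℕ with b ≥ |adom(s0) ∪ C|. Then for every FO-ECTLK formula φ, if P_b ⊨ φ then P ⊨ φ. -/
/-!  Common formalisation of artifact-centric multi-agent systems (AC-MAS). -/

open Set

/-! Existential temporal-epistemic formulas only assert the existence of runs, indistinguishable
states and epistemic paths. Every such witness in the `b`-restriction is also one in the full
system, and both systems start from the same state, so truth transfers from `P_b` to `P`. -/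

namespace ACMAS

variable {D : Schema} {n : ℕ} {sig : Fin (n+1) → AgentSig} {U : Type}
  {Ag : ∀ i, Agent D (sig i) U}

structure IsSubsystem (N M : ACMAS D sig Ag) : Prop where
  S_subset : N.S ⊆ M.S
  tr_mono : ∀ s t, N.Tr s t → M.Tr s t

namespace IsSubsystem

variable {N M : ACMAS D sig Ag}

theorem epi (h : N.IsSubsystem M) {i : Fin (n+1)} {s t : GState D n U} :
    N.Epi i s t → M.Epi i s t
  | ⟨hs, ht, hi⟩ => ⟨h.S_subset hs, h.S_subset ht, hi⟩

theorem epiAny (h : N.IsSubsystem M) {s t : GState D n U} : N.EpiAny s t → M.EpiAny s t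
  | ⟨i, hi⟩ => ⟨i, h.epi hi⟩

theorem isRun (h : N.IsSubsystem M) {r : ℕ → GState D n U} : N.IsRun r → M.IsRun r
  | ⟨hS, hTr⟩ => ⟨fun k => h.S_subset (hS k), fun k => h.tr_mono _ _ (hTr k)⟩

end IsSubsystem

end ACMAS

theorem IsBRestriction.isSubsystem {D : Schema} {n : ℕ} {sig : Fin (n+1) → AgentSig} {U : Type}
    {Ag : ∀ i, Agent D (sig i) U} {Mb M : ACMAS D sig Ag} {b : ℕ}
    (h : IsBRestriction Mb M b) : Mb.IsSubsystem M where
  S_subset s hs := by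
    rw [h.2.1] at hs
    exact hs.1
  tr_mono := by
    rintro s t ⟨a, ht⟩
    rw [h.2.2] at ht
    exact ⟨a, ht.1⟩

namespace FOECTLK

variable {D : Schema} {C : Type} {n : ℕ} {sig : Fin (n+1) → AgentSig} {U : Type}
  {Ag : ∀ i, Agent D (sig i) U} {N M : ACMAS D sig Ag}

theorem sat_of_isSubsystem (cst : C → U) (h : N.IsSubsystem M) (φ : FOECTLK D C n)
    {s : GState D n U} {σ : ℕ → U} : sat cst N φ s σ → sat cst M φ s σ := by
  induction φ generalizing s σ with
  | atom ψ => exact id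
  | and φ ψ ihφ ihψ => exact And.imp ihφ ihψ
  | or φ ψ ihφ ihψ => exact Or.imp ihφ ihψ
  | all x φ ih => exact fun hφ u hu => ih (hφ u hu)
  | ex x φ ih => exact fun ⟨u, hu, hφ⟩ => ⟨u, hu, ih hφ⟩
  | enext φ ih => exact fun ⟨r, hr, hr0, hφ⟩ => ⟨r, h.isRun hr, hr0, ih hφ⟩
  | eu φ ψ ihφ ihψ =>
    exact fun ⟨r, hr, hr0, k, hψ, hφ⟩ =>
      ⟨r, h.isRun hr, hr0, k, ihψ hψ, fun j hj => ihφ (hφ j hj)⟩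
  | dknow i φ ih => exact fun ⟨t, hst, hφ⟩ => ⟨t, h.epi hst, ih hφ⟩
  | dck φ ih =>
    exact fun ⟨t, hst, hφ⟩ => ⟨t, Relation.TransGen.mono (fun _ _ => h.epiAny) s t hst, ih hφ⟩

theorem satM_of_isSubsystem (cst : C → U) (h : N.IsSubsystem M) (h0 : N.s0 = M.s0)
    (φ : FOECTLK D C n) : satM cst N φ → satM cst M φ := fun hφ σ =>
  h0 ▸ sat_of_isSubsystem cst h φ (hφ σ)

end FOECTLK

theorem statement16_general
    {D : Schema} {C : Type} {n : ℕ}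
    {sig : Fin (n+1) → AgentSig} {U : Type}
    (cst : C → U)
    {Ag : ∀ i, Agent D (sig i) U}
    (M : ACMAS D sig Ag)
    (b : ℕ)
    (Mb : ACMAS D sig Ag) (hres : IsBRestriction Mb M b)
    (φ : FOECTLK D C n) :
    FOECTLK.satM cst Mb φ → FOECTLK.satM cst M φ :=
  FOECTLK.satM_of_isSubsystem cst hres.isSubsystem hres.1 φ

theorem statement16
    {D : Schema} {C : Type} [Fintype C] {n : ℕ}
    {sig : Fin (n+1) → AgentSig} {U : Type}
    (cst : C → U) (hcst : Function.Injective cst)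
    {Ag : ∀ i, Agent D (sig i) U}
    (M : ACMAS D sig Ag) (hM : M.Std)
    (b : ℕ) (hb : (adomF M.s0 ∪ Set.range cst).ncard ≤ b)
    (Mb : ACMAS D sig Ag) (hres : IsBRestriction Mb M b)
    (φ : FOECTLK D C n) :
    FOECTLK.satM cst Mb φ → FOECTLK.satM cst M φ :=
  statement16_general cst M b Mb hres φ
end
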